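/- arXiv:2506.23238 — 9 statements merged into one kernel-verified Lean document; each statement's English description precedes it below -/
import Mathlib

section
/- For every r-element subset σ of {1,…,rd} there exists exactly one a with 1 ≤ a ≤ d such that σ is a hyperedge of Ω_a^{(r,d)}. Consequently the hypergraphs Ω_1^{(r,d)},…,Ω_d^{(r,d)} have pairwise disjoint hyperedge sets whose union is the set of all r-element subsets of {1,…,rd}, i.e. (Ω_1^{(r,d)},…,Ω_d^{(r,d)}) is a hyperedge d-partition of the r-uniform complete hypergraph K_{rd}^{(r)}. -/
open Finset
open scoped Classical

/-- `Sset r a` is the set `S_a = {r(a-1)+1, ..., ra}`. -/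
def Sset (r a : ℕ) : Finset ℕ := Finset.Icc (r * (a - 1) + 1) (r * a)

/-- The hyperedge set of the `r`-uniform hypergraph `Ω_a^{(r,d)}`: all `r`-element
subsets `{i_1 < ... < i_r}` of `{1,...,rd}` such that there is `t ∈ {1,...,r}` with
`i_1 + ... + i_r ≡ t-1 (mod r)` and `i_t ∈ S_a` (the `t`-th smallest element `i_t`
is characterized as the `x ∈ σ` with exactly `t-1` smaller elements of `σ`). -/
noncomputable def OmegaEdges (r d a : ℕ) : Finset (Finset ℕ) :=
  ((Finset.Icc 1 (r * d)).powersetCard r).filter (fun σ =>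
    ∃ t ∈ Finset.Icc 1 r, ∃ x ∈ σ,
      (σ.filter (· < x)).card = t - 1 ∧
      (∑ i ∈ σ, i) % r = t - 1 ∧
      x ∈ Sset r a)

/-- The hyperedge set of `Γ_{k,r}(j_{k+1},...,j_r)` (where `J = {j_{k+1},...,j_r}`):
the hyperedges of `Ω_1^{(r,d)}` having exactly `k` elements in `{1,...,r}` and whose
part outside `{1,...,r}` equals `J`. -/
noncomputable def GammaEdges (r d k : ℕ) (J : Finset ℕ) : Finset (Finset ℕ) :=
  (OmegaEdges r d 1).filter (fun σ =>
    (σ ∩ Finset.Icc 1 r).card = k ∧ σ \ Finset.Icc 1 r = J)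

/-- The hyperedge set of the `k`-uniform hypergraph `Γ_{k,r}^a`: all `k`-element
subsets `{i_1 < ... < i_k}` of `{1,...,r}` with `i_1 + ... + i_k ≡ a + t (mod r)`
for some `0 ≤ t ≤ k-1`. -/
noncomputable def GammaA (r k : ℕ) (a : ℤ) : Finset (Finset ℕ) :=
  ((Finset.Icc 1 r).powersetCard k).filter (fun σ =>
    ∃ t ∈ Finset.range k, (∑ i ∈ σ, (i : ℤ)) % (r : ℤ) = (a + (t : ℤ)) % (r : ℤ))

/-- A family `E` of hyperedges is leaf-equivalent to the empty hypergraph if its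
hyperedges can be enumerated `σ_1, ..., σ_n` so that each `σ_i` has a face
`σ_i \ {s}` (`s ∈ σ_i`) not contained in any earlier `σ_j`. -/
def LeafEquivToEmpty (E : Finset (Finset ℕ)) : Prop :=
  ∃ l : List (Finset ℕ), l.Nodup ∧ l.toFinset = E ∧
    ∀ i : Fin l.length, ∃ s ∈ l.get i,
      ∀ j : Fin l.length, (j : ℕ) < (i : ℕ) → ¬ (l.get i \ {s} ⊆ l.get j)

/-- The boundary of a single simplex `{a_1 < a_2 < ... < a_k}`:
`∑_{s=1}^{k} (-1)^{s+1} {a_1,...,a_{s-1},a_{s+1},...,a_k}`. -/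
noncomputable def boundaryOf (σ : Finset ℕ) : Finset ℕ →₀ ℚ :=
  ∑ s ∈ σ, ((-1 : ℚ) ^ ((σ.filter (· < s)).card)) • Finsupp.single (σ.erase s) (1 : ℚ)

/-- The simplicial boundary map `∂` on the free `ℚ`-vector space with basis the
finite subsets of `ℕ`. -/
noncomputable def boundaryMap : (Finset ℕ →₀ ℚ) →ₗ[ℚ] (Finset ℕ →₀ ℚ) :=
  Finsupp.lsum ℚ (fun σ => LinearMap.toSpanSingleton ℚ (Finset ℕ →₀ ℚ) (boundaryOf σ))

/-- The space of top-dimensional cycles of the hypergraph with hyperedge set `E`: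
elements of the span of `E` killed by the boundary map.  Its dimension is the top
Betti number. -/
noncomputable def cycleSpace (E : Finset (Finset ℕ)) : Submodule ℚ (Finset ℕ →₀ ℚ) :=
  Finsupp.supported ℚ ℚ (↑E : Set (Finset ℕ)) ⊓ LinearMap.ker boundaryMap

lemma count_inj {σ : Finset ℕ} {x y : ℕ} (hx : x ∈ σ) (hy : y ∈ σ)
    (h : (σ.filter (· < x)).card = (σ.filter (· < y)).card) : x = y := by
  rcases lt_trichotomy x y with h1 | h1 | h1
  · exfalso
    have hss : σ.filter (· < x) ⊂ σ.filter (· < y) := by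
      refine ⟨fun z hz => ?_, fun hc => ?_⟩
      · have hz' := Finset.mem_filter.1 hz
        exact Finset.mem_filter.2 ⟨hz'.1, lt_trans hz'.2 h1⟩
      · have hxm : x ∈ σ.filter (· < y) := Finset.mem_filter.2 ⟨hx, h1⟩
        exact lt_irrefl x (Finset.mem_filter.1 (hc hxm)).2
    exact absurd h (Nat.ne_of_lt (Finset.card_lt_card hss))
  · exact h1
  · exfalso
    have hss : σ.filter (· < y) ⊂ σ.filter (· < x) := by
      refine ⟨fun z hz => ?_, fun hc => ?_⟩
      · have hz' := Finset.mem_filter.1 hz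
        exact Finset.mem_filter.2 ⟨hz'.1, lt_trans hz'.2 h1⟩
      · have hym : y ∈ σ.filter (· < x) := Finset.mem_filter.2 ⟨hy, h1⟩
        exact lt_irrefl y (Finset.mem_filter.1 (hc hym)).2
    exact absurd h.symm (Nat.ne_of_lt (Finset.card_lt_card hss))

lemma count_surj {σ : Finset ℕ} {m : ℕ} (hm : m < σ.card) :
    ∃ x ∈ σ, (σ.filter (· < x)).card = m := by
  have h1 : ∀ x (_ : x ∈ σ), (σ.filter (· < x)).card ∈ Finset.range σ.card := by
    intro x hx
    simp only [Finset.mem_range]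
    apply Finset.card_lt_card
    refine ⟨Finset.filter_subset _ _, fun hsub => ?_⟩
    exact lt_irrefl x (Finset.mem_filter.1 (hsub hx)).2
  obtain ⟨x, hx, hxm⟩ := Finset.surj_on_of_inj_on_of_card_le
    (fun x (_ : x ∈ σ) => (σ.filter (· < x)).card) h1
    (fun a b ha hb h => count_inj ha hb h) (by simp) m (Finset.mem_range.2 hm)
  exact ⟨x, hx, hxm.symm⟩

lemma Sset_exu {r d x : ℕ} (hr : 1 ≤ r) (hx : x ∈ Finset.Icc 1 (r * d)) :
    ∃! a : ℕ, a ∈ Finset.Icc 1 d ∧ x ∈ Sset r a := by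
  simp only [Finset.mem_Icc] at hx
  obtain ⟨q, hq1, hq2, hqd⟩ :
      ∃ q, r * q ≤ x - 1 ∧ x - 1 < r * (q + 1) ∧ q < d := by
    refine ⟨(x - 1) / r, ?_, Nat.lt_mul_div_succ _ hr, ?_⟩
    · rw [Nat.mul_comm]; exact Nat.div_mul_le_self _ _
    · have h' : r * ((x - 1) / r) < r * d := by
        calc r * ((x - 1) / r) ≤ x - 1 := by rw [Nat.mul_comm]; exact Nat.div_mul_le_self _ _
        _ < r * d := by omega
      exact Nat.lt_of_mul_lt_mul_left h'
  refine ⟨q + 1, ⟨Finset.mem_Icc.2 ⟨by omega, by omega⟩, ?_⟩, ?_⟩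
  · simp only [Sset, Finset.mem_Icc, Nat.add_sub_cancel]
    omega
  · rintro b ⟨hb, hxb⟩
    simp only [Finset.mem_Icc] at hb
    simp only [Sset, Finset.mem_Icc] at hxb
    by_contra hne
    rcases Nat.lt_or_ge b (q + 1) with h1 | h1
    · have : r * b ≤ r * q := Nat.mul_le_mul_left r (by omega)
      omega
    · have h1' : q + 1 ≤ b - 1 := by omega
      have : r * (q + 1) ≤ r * (b - 1) := Nat.mul_le_mul_left r h1'
      omega

lemma mem_OmegaEdges {r d a : ℕ} {σ : Finset ℕ} :
    σ ∈ OmegaEdges r d a ↔ (σ ⊆ Finset.Icc 1 (r * d) ∧ σ.card = r) ∧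
      ∃ t ∈ Finset.Icc 1 r, ∃ x ∈ σ,
        (σ.filter (· < x)).card = t - 1 ∧
        (∑ i ∈ σ, i) % r = t - 1 ∧
        x ∈ Sset r a := by
  simp only [OmegaEdges, Finset.mem_filter, Finset.mem_powersetCard]

/-- every `r`-element subset of `{1,...,rd}` is a hyperedge of exactly one
`Ω_a^{(r,d)}` with `1 ≤ a ≤ d`; consequently the `Ω_a^{(r,d)}` have pairwise disjoint
hyperedge sets whose union is the hyperedge set of `K_{rd}^{(r)}`. -/
theorem stmt0 (r d : ℕ) (hr : 1 ≤ r) (hd : 1 ≤ d) :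
    (∀ σ : Finset ℕ, σ ⊆ Finset.Icc 1 (r * d) → σ.card = r →
      ∃! a : ℕ, a ∈ Finset.Icc 1 d ∧ σ ∈ OmegaEdges r d a) ∧
    (∀ a ∈ Finset.Icc 1 d, ∀ b ∈ Finset.Icc 1 d, a ≠ b →
      Disjoint (OmegaEdges r d a) (OmegaEdges r d b)) ∧
    (Finset.Icc 1 d).biUnion (fun a => OmegaEdges r d a)
      = (Finset.Icc 1 (r * d)).powersetCard r := by
  have key : ∀ σ : Finset ℕ, σ ⊆ Finset.Icc 1 (r * d) → σ.card = r →
      ∃! a : ℕ, a ∈ Finset.Icc 1 d ∧ σ ∈ OmegaEdges r d a := by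
    intro σ hσ hcard
    set m := (∑ i ∈ σ, i) % r with hm
    have hmr : m < r := Nat.mod_lt _ hr
    obtain ⟨x, hxσ, hxm⟩ := count_surj (show m < σ.card by rw [hcard]; exact hmr)
    obtain ⟨a, ⟨ha, hxa⟩, hau⟩ := Sset_exu hr (hσ hxσ)
    refine ⟨a, ⟨ha, ?_⟩, ?_⟩
    · refine mem_OmegaEdges.2 ⟨⟨hσ, hcard⟩, m + 1, Finset.mem_Icc.2 ⟨by omega, by omega⟩,
        x, hxσ, by simpa using hxm, by simp [hm], hxa⟩
    · rintro b ⟨hb, hbmem⟩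
      obtain ⟨-, t, ht, y, hyσ, h1, h2, h3⟩ := mem_OmegaEdges.1 hbmem
      simp only [Finset.mem_Icc] at ht
      have ht1 : t - 1 = m := h2.symm
      have hyx : y = x := count_inj hyσ hxσ (by rw [h1, hxm, ht1])
      exact hau b ⟨hb, hyx ▸ h3⟩
  refine ⟨key, ?_, ?_⟩
  · intro a ha b hb hab
    rw [Finset.disjoint_left]
    intro σ hσa hσb
    obtain ⟨⟨hsub, hc⟩, -⟩ := mem_OmegaEdges.1 hσa
    obtain ⟨c, -, hcu⟩ := key σ hsub hc
    exact hab ((hcu a ⟨ha, hσa⟩).trans (hcu b ⟨hb, hσb⟩).symm)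
  · ext σ
    simp only [Finset.mem_biUnion, Finset.mem_powersetCard]
    constructor
    · rintro ⟨a, -, hσa⟩
      exact (mem_OmegaEdges.1 hσa).1
    · rintro ⟨hsub, hc⟩
      obtain ⟨a, ⟨ha, hmem⟩, -⟩ := key σ hsub hc
      exact ⟨a, ha, hmem⟩
end

section
/- For each 1 ≤ a < d there exists a bijection φ of {1,…,rd} onto itself such that for every r-element subset σ of {1,…,rd}, σ is a hyperedge of Ω_{a+1}^{(r,d)} if and only if φ(σ) is a hyperedge of Ω_a^{(r,d)}; in particular the hypergraphs Ω_a^{(r,d)} and Ω_{a+1}^{(r,d)} are isomorphic. -/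
open Finset
open scoped Classical

/-- The shifting bijection. -/
def phiF (r d i : ℕ) : ℕ :=
  if r < i then i - r else if i = 1 then r * d else r * (d - 1) + (i - 1)

def psiF (r d j : ℕ) : ℕ :=
  if j ≤ r * (d - 1) then j + r else if j = r * d then 1 else j - r * (d - 1) + 1

lemma mem_omegaEdges_iff {r d a : ℕ} (hr : 1 ≤ r) {σ : Finset ℕ} :
    σ ∈ OmegaEdges r d a ↔
      (σ ⊆ Finset.Icc 1 (r * d) ∧ σ.card = r) ∧
        ∃ x ∈ σ, x ∈ Sset r a ∧ (σ.filter (· < x)).card = (∑ i ∈ σ, i) % r := by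
  unfold OmegaEdges
  simp only [Finset.mem_filter, Finset.mem_powersetCard]
  constructor
  · rintro ⟨hs, t, ht, x, hx, h1, h2, h3⟩
    simp only [Finset.mem_Icc] at ht
    exact ⟨hs, x, hx, h3, by omega⟩
  · rintro ⟨hs, x, hx, h3, h1⟩
    have hss : σ.filter (· < x) ⊂ σ := Finset.filter_ssubset.2 ⟨x, hx, lt_irrefl x⟩
    have hlt := Finset.card_lt_card hss
    refine ⟨hs, (σ.filter (· < x)).card + 1, ?_, x, hx, by omega, by omega, h3⟩
    simp only [Finset.mem_Icc]
    omega

lemma cast_eq_mod {r : ℕ} (hr : 1 ≤ r) {m n : ℕ} (hm : m < r)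
    (h : (m : ZMod r) = (n : ZMod r)) : m = n % r := by
  haveI : NeZero r := ⟨by omega⟩
  rw [← ZMod.natCast_mod n r] at h
  have h1 := ZMod.val_cast_of_lt hm
  have h2 := ZMod.val_cast_of_lt (Nat.mod_lt n (show 0 < r by omega))
  rw [← h1, h, h2]

/-- for `1 ≤ a < d` there is a bijection `φ` of `{1,...,rd}` such that an
`r`-element subset `σ` is a hyperedge of `Ω_{a+1}^{(r,d)}` iff `φ(σ)` is a hyperedge of
`Ω_a^{(r,d)}`; in particular the two hypergraphs are isomorphic. -/
theorem stmt1 (r d a : ℕ) (hr : 1 ≤ r) (hd : 1 ≤ d) (ha : 1 ≤ a) (had : a < d) :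
    ∃ φ : ℕ → ℕ, Set.BijOn φ (Set.Icc 1 (r * d)) (Set.Icc 1 (r * d)) ∧
      ∀ σ : Finset ℕ, σ ⊆ Finset.Icc 1 (r * d) → σ.card = r →
        (σ ∈ OmegaEdges r d (a + 1) ↔ σ.image φ ∈ OmegaEdges r d a) := by
  -- nonlinear arithmetic facts for omega
  have e1 : r * (d - 1) + r = r * d := by
    obtain ⟨e, rfl⟩ : ∃ e, d = e + 1 := ⟨d - 1, by omega⟩
    simp [Nat.mul_add]
  have e2 : r * (a - 1) + r = r * a := by
    obtain ⟨b, rfl⟩ : ∃ b, a = b + 1 := ⟨a - 1, by omega⟩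
    simp [Nat.mul_add]
  have e3 : r * a + r = r * (a + 1) := by ring
  have e4 : r * (a + 1) ≤ r * d := Nat.mul_le_mul_left r (by omega)
  have e5 : r * a ≤ r * (d - 1) := Nat.mul_le_mul_left r (by omega)
  have e6 : r * (a + 1 - 1) = r * a := by simp
  have e7 : r ≤ r * a := by
    calc r = r * 1 := by ring
    _ ≤ r * a := Nat.mul_le_mul_left r ha
  set φ := phiF r d with hφ
  set ψ := psiF r d with hψ
  have hφdef : ∀ i, φ i =
      if r < i then i - r else if i = 1 then r * d else r * (d - 1) + (i - 1) :=
    fun i => rfl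
  have hψdef : ∀ j, ψ j =
      if j ≤ r * (d - 1) then j + r else if j = r * d then 1 else j - r * (d - 1) + 1 :=
    fun j => rfl
  have hmapφ : ∀ i, 1 ≤ i → i ≤ r * d → 1 ≤ φ i ∧ φ i ≤ r * d := by
    intro i h1 h2
    rw [hφdef i]
    split_ifs <;> omega
  have hmapψ : ∀ j, 1 ≤ j → j ≤ r * d → 1 ≤ ψ j ∧ ψ j ≤ r * d := by
    intro j h1 h2
    rw [hψdef j]
    split_ifs <;> omega
  have hleft : ∀ i, 1 ≤ i → i ≤ r * d → ψ (φ i) = i := by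
    intro i h1 h2
    rw [hφdef i, hψdef _]
    split_ifs <;> omega
  have hright : ∀ j, 1 ≤ j → j ≤ r * d → φ (ψ j) = j := by
    intro j h1 h2
    rw [hψdef j, hφdef _]
    split_ifs <;> omega
  have hbij : Set.BijOn φ (Set.Icc 1 (r * d)) (Set.Icc 1 (r * d)) := by
    refine Set.InvOn.bijOn (f' := ψ) ⟨?_, ?_⟩ ?_ ?_
    · intro i hi; rw [Set.mem_Icc] at hi; exact hleft i hi.1 hi.2
    · intro j hj; rw [Set.mem_Icc] at hj; exact hright j hj.1 hj.2
    · intro i hi; rw [Set.mem_Icc] at hi ⊢; exact hmapφ i hi.1 hi.2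
    · intro j hj; rw [Set.mem_Icc] at hj ⊢; exact hmapψ j hj.1 hj.2
  refine ⟨φ, hbij, ?_⟩
  intro σ hσsub hσcard
  have hmem : ∀ i ∈ σ, 1 ≤ i ∧ i ≤ r * d := by
    intro i hi
    have := hσsub hi
    rwa [Finset.mem_Icc] at this
  have hinj : ∀ i ∈ σ, ∀ j ∈ σ, φ i = φ j → i = j := by
    intro i hi j hj h
    obtain ⟨hi1, hi2⟩ := hmem i hi
    obtain ⟨hj1, hj2⟩ := hmem j hj
    rw [← hleft i hi1 hi2, ← hleft j hj1 hj2, h]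
  set τ := σ.image φ with hτ
  have hτcard : τ.card = r := by
    rw [hτ, Finset.card_image_of_injOn hinj, hσcard]
  have hτsub : τ ⊆ Finset.Icc 1 (r * d) := by
    intro j hj
    rw [hτ, Finset.mem_image] at hj
    obtain ⟨i, hi, rfl⟩ := hj
    obtain ⟨h1, h2⟩ := hmem i hi
    rw [Finset.mem_Icc]
    exact hmapφ i h1 h2
  -- sum relation in ZMod r
  set k := (σ.filter (fun i => i ≤ r)).card with hk
  have hsum : ((∑ i ∈ τ, i : ℕ) : ZMod r) + (k : ZMod r) = ((∑ i ∈ σ, i : ℕ) : ZMod r) := by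
    have h1 : (∑ i ∈ τ, i) = ∑ i ∈ σ, φ i := Finset.sum_image hinj
    have h2 : k = ∑ i ∈ σ, (if i ≤ r then 1 else 0) := Finset.card_filter _ σ
    rw [h1, h2]
    push_cast
    rw [← Finset.sum_add_distrib]
    apply Finset.sum_congr rfl
    intro i hi
    obtain ⟨hi1, hi2⟩ := hmem i hi
    rw [hφdef i]
    by_cases hir : r < i
    · rw [if_pos hir, if_neg (show ¬ i ≤ r by omega), add_zero,
        Nat.cast_sub (show r ≤ i by omega), ZMod.natCast_self, sub_zero]
    · rw [if_neg hir, if_pos (show i ≤ r by omega)]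
      by_cases hi1' : i = 1
      · subst hi1'
        rw [if_pos rfl, Nat.cast_mul, ZMod.natCast_self, zero_mul]
        simp
      · rw [if_neg hi1', Nat.cast_add, Nat.cast_mul, ZMod.natCast_self, zero_mul, zero_add,
          Nat.cast_sub (show 1 ≤ i by omega)]
        rw [show ((i : ℕ) : ZMod r) = (((i - 1) + 1 : ℕ) : ZMod r) by rw [Nat.sub_add_cancel hi1]]
        push_cast [Nat.cast_sub (show 1 ≤ i by omega)]
        ring
  -- rank relation
  have hrank : ∀ x ∈ σ, r < x → x ≤ r * a + r →
      (τ.filter (· < x - r)).card + k = (σ.filter (· < x)).card := by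
    intro x hx hrx hxa
    have h1 : τ.filter (· < x - r) = (σ.filter (fun i => φ i < x - r)).image φ := by
      rw [hτ, Finset.filter_image]
    have h2 : σ.filter (fun i => φ i < x - r) = σ.filter (fun i => r < i ∧ i < x) := by
      apply Finset.filter_congr
      intro i hi
      obtain ⟨hi1, hi2⟩ := hmem i hi
      rw [hφdef i]
      constructor
      · intro h
        split_ifs at h <;> omega
      · intro h
        rw [if_pos h.1]
        omega
    have h3 : (τ.filter (· < x - r)).card = (σ.filter (fun i => r < i ∧ i < x)).card := by
      rw [h1, h2, Finset.card_image_of_injOn]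
      intro i hi j hj h
      exact hinj i (Finset.mem_of_mem_filter i hi) j (Finset.mem_of_mem_filter j hj) h
    rw [h3]
    have h4 := Finset.card_filter_add_card_filter_not
      (s := σ.filter (· < x)) (p := fun i => i ≤ r)
    rw [Finset.filter_filter, Finset.filter_filter] at h4
    have h5 : σ.filter (fun i => i < x ∧ i ≤ r) = σ.filter (fun i => i ≤ r) := by
      apply Finset.filter_congr
      intro i hi
      constructor
      · intro h; exact h.2
      · intro h; exact ⟨by omega, h⟩
    have h6 : σ.filter (fun i => i < x ∧ ¬ i ≤ r) = σ.filter (fun i => r < i ∧ i < x) := by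
      apply Finset.filter_congr
      intro i hi
      constructor
      · intro h; exact ⟨by omega, h.1⟩
      · intro h; exact ⟨h.2, by omega⟩
    rw [h5, h6] at h4
    omega
  constructor
  · -- forward
    intro hσmem
    rw [mem_omegaEdges_iff hr] at hσmem ⊢
    obtain ⟨-, x, hx, hxS, hxrank⟩ := hσmem
    unfold Sset at hxS
    rw [Finset.mem_Icc] at hxS
    have hrx : r < x := by omega
    have hxa : x ≤ r * a + r := by omega
    have hφx : φ x = x - r := by
      rw [hφdef x, if_pos hrx]
    have hR := hrank x hx hrx hxa
    have hss : σ.filter (· < x) ⊂ σ := Finset.filter_ssubset.2 ⟨x, hx, lt_irrefl x⟩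
    have hlt : (σ.filter (· < x)).card < r := by
      have := Finset.card_lt_card hss
      omega
    refine ⟨⟨hτsub, hτcard⟩, x - r, ?_, ?_, ?_⟩
    · rw [hτ, Finset.mem_image]
      exact ⟨x, hx, hφx⟩
    · unfold Sset
      rw [Finset.mem_Icc]
      omega
    · apply cast_eq_mod hr (show (τ.filter (· < x - r)).card < r by omega)
      have hcast : (((σ.filter (· < x)).card : ℕ) : ZMod r) = ((∑ i ∈ σ, i : ℕ) : ZMod r) := by
        rw [hxrank]
        exact ZMod.natCast_mod _ _
      have h9 : (((τ.filter (· < x - r)).card : ℕ) : ZMod r) + (k : ZMod r)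
          = ((∑ i ∈ τ, i : ℕ) : ZMod r) + (k : ZMod r) := by
        rw [hsum, ← hcast, ← hR, Nat.cast_add]
      exact add_right_cancel h9
  · -- backward
    intro hτmem
    rw [mem_omegaEdges_iff hr] at hτmem ⊢
    obtain ⟨-, x', hx', hxS, hxrank⟩ := hτmem
    rw [hτ, Finset.mem_image] at hx'
    obtain ⟨x, hx, rfl⟩ := hx'
    obtain ⟨hx1, hx2⟩ := hmem x hx
    unfold Sset at hxS
    rw [Finset.mem_Icc] at hxS
    have hrx : r < x := by
      by_contra h
      have h2 : r * a < φ x := by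
        rw [hφdef x]
        split_ifs <;> omega
      omega
    have hφx : φ x = x - r := by
      rw [hφdef x, if_pos hrx]
    rw [hφx] at hxS hxrank
    have hxa : x ≤ r * a + r := by omega
    have hR := hrank x hx hrx hxa
    refine ⟨⟨hσsub, hσcard⟩, x, hx, ?_, ?_⟩
    · unfold Sset
      rw [Finset.mem_Icc]
      omega
    · have hss : σ.filter (· < x) ⊂ σ := Finset.filter_ssubset.2 ⟨x, hx, lt_irrefl x⟩
      have hlt : (σ.filter (· < x)).card < r := by
        have := Finset.card_lt_card hss
        omega
      apply cast_eq_mod hr hlt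
      have hcast : (((τ.filter (· < x - r)).card : ℕ) : ZMod r) = ((∑ i ∈ τ, i : ℕ) : ZMod r) := by
        rw [hxrank]
        exact ZMod.natCast_mod _ _
      rw [← hR, Nat.cast_add, hcast, hsum]
end

section
/- For every (r−1)-element subset τ of {1,…,rd} there exists x ∈ {1,…,r} with x ∉ τ such that τ ∪ {x} is a hyperedge of Ω_1^{(r,d)}. In other words, the set of (r−1)-faces of Ω_1^{(r,d)} is the set of all (r−1)-element subsets of {1,…,rd}. -/
open Finset
open scoped Classical

lemma exists_rank (σ : Finset ℕ) (k : ℕ) (hk : k < σ.card) :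
    ∃ y ∈ σ, (σ.filter (· < y)).card = k := by
  classical
  set f : ℕ → ℕ := fun y => (σ.filter (· < y)).card with hf
  have hmono : ∀ a ∈ σ, ∀ b ∈ σ, a < b → f a < f b := by
    intro a ha b hb hab
    apply Finset.card_lt_card
    constructor
    · intro z hz
      simp only [mem_filter] at hz ⊢
      exact ⟨hz.1, hz.2.trans hab⟩
    · intro hsub
      have : a ∈ σ.filter (· < b) := by simp [ha, hab]
      have := hsub this
      simp at this
  have hinj : Set.InjOn f σ := by
    intro a ha b hb hab
    rcases lt_trichotomy a b with h | h | h
    · exact absurd hab (hmono a ha b hb h).ne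
    · exact h
    · exact absurd hab.symm (hmono b hb a ha h).ne
  have himsub : σ.image f ⊆ Finset.range σ.card := by
    intro n hn
    rcases Finset.mem_image.mp hn with ⟨y, hy, rfl⟩
    have : σ.filter (· < y) ⊆ σ.erase y := by
      intro z hz
      simp only [mem_filter] at hz
      exact Finset.mem_erase.mpr ⟨hz.2.ne, hz.1⟩
    have h1 : f y ≤ (σ.erase y).card := Finset.card_le_card this
    have h2 : (σ.erase y).card < σ.card := Finset.card_erase_lt_of_mem hy
    exact Finset.mem_range.mpr (lt_of_le_of_lt h1 h2)
  have hcard : (σ.image f).card = σ.card := Finset.card_image_of_injOn hinj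
  have : σ.image f = Finset.range σ.card :=
    Finset.eq_of_subset_of_card_le himsub (by simp [hcard])
  have : k ∈ σ.image f := by rw [this]; exact Finset.mem_range.mpr hk
  rcases Finset.mem_image.mp this with ⟨y, hy, hyk⟩
  exact ⟨y, hy, hyk⟩

lemma main_ext (r d : ℕ) (hr : 1 ≤ r) (hd : 1 ≤ d)
    (τ : Finset ℕ) (hτ : τ ⊆ Finset.Icc 1 (r * d)) (hcard : τ.card = r - 1) :
    ∃ x ∈ Finset.Icc 1 r, x ∉ τ ∧ insert x τ ∈ OmegaEdges r d 1 := by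
  classical
  set m := (τ ∩ Finset.Icc 1 r).card with hm
  have hmle : m ≤ r - 1 := hcard ▸ Finset.card_le_card (Finset.inter_subset_left)
  have hm1r : m + 1 ≤ r := by omega
  set A := Finset.Icc 1 r \ τ with hA
  have hAcard : A.card = r - m := by
    have h1 : (Finset.Icc 1 r \ τ).card = (Finset.Icc 1 r).card - (Finset.Icc 1 r ∩ τ).card :=
      Finset.card_sdiff_add_card_inter (Finset.Icc 1 r) τ ▸ by omega
    rw [hA, h1, Finset.inter_comm, Nat.card_Icc]
    omega
  set S := ∑ i ∈ τ, i with hS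
  -- pigeonhole: find x in A with (S + x) % r ≤ m
  have hg : ∃ x ∈ A, (S + x) % r ≤ m := by
    by_contra hno
    push_neg at hno
    have hinj : Set.InjOn (fun x => (S + x) % r) A := by
      intro a ha b hb hab
      have ha' : a ∈ Finset.Icc 1 r \ τ := ha
      have hb' : b ∈ Finset.Icc 1 r \ τ := hb
      obtain ⟨⟨ha1, ha2⟩, -⟩ : (1 ≤ a ∧ a ≤ r) ∧ a ∉ τ := by
        simpa [Finset.mem_sdiff, Finset.mem_Icc] using ha'
      obtain ⟨⟨hb1, hb2⟩, -⟩ : (1 ≤ b ∧ b ≤ r) ∧ b ∉ τ := by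
        simpa [Finset.mem_sdiff, Finset.mem_Icc] using hb'
      have hab' : (S + a) % r = (S + b) % r := hab
      have : a % r = b % r := Nat.ModEq.add_left_cancel' S hab'
      rcases le_total a b with h | h
      · have : r ∣ b - a := (Nat.modEq_iff_dvd' h).mp this
        have := Nat.eq_zero_of_dvd_of_lt this (by omega)
        omega
      · have : r ∣ a - b := (Nat.modEq_iff_dvd' h).mp this.symm
        have := Nat.eq_zero_of_dvd_of_lt this (by omega)
        omega
    have hsub : A.image (fun x => (S + x) % r) ⊆ Finset.Ico (m + 1) r := by
      intro n hn
      rcases Finset.mem_image.mp hn with ⟨x, hx, rfl⟩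
      exact Finset.mem_Ico.mpr ⟨hno x hx, Nat.mod_lt _ (by omega)⟩
    have := Finset.card_le_card hsub
    rw [Finset.card_image_of_injOn hinj, hAcard, Nat.card_Ico] at this
    omega
  rcases hg with ⟨x, hxA, hxmod⟩
  have hxIcc : x ∈ Finset.Icc 1 r := (Finset.mem_sdiff.mp hxA).1
  have hxτ : x ∉ τ := (Finset.mem_sdiff.mp hxA).2
  refine ⟨x, hxIcc, hxτ, ?_⟩
  set σ := insert x τ with hσ
  have hσcard : σ.card = r := by
    rw [hσ, Finset.card_insert_of_notMem hxτ, hcard]; omega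
  have hsum : ∑ i ∈ σ, i = x + S := by rw [hσ, Finset.sum_insert hxτ]
  have hσsub : σ ⊆ Finset.Icc 1 (r * d) := by
    intro z hz
    rcases Finset.mem_insert.mp hz with rfl | hz
    · have := Finset.mem_Icc.mp hxIcc
      exact Finset.mem_Icc.mpr ⟨this.1, this.2.trans (Nat.le_mul_of_pos_right r (by omega))⟩
    · exact hτ hz
  -- find y with rank (x + S) % r
  have hmodlt : (x + S) % r < r := Nat.mod_lt _ (by omega)
  obtain ⟨y, hyσ, hyrank⟩ := exists_rank σ ((x + S) % r) (hσcard ▸ hmodlt)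
  -- y ≤ r
  have hsint : (σ ∩ Finset.Icc 1 r).card = m + 1 := by
    have : σ ∩ Finset.Icc 1 r = insert x (τ ∩ Finset.Icc 1 r) := by
      rw [hσ, Finset.insert_inter_of_mem hxIcc]
    rw [this, Finset.card_insert_of_notMem (fun h => hxτ (Finset.mem_inter.mp h).1)]
  have hyr : y ≤ r := by
    by_contra hy
    push_neg at hy
    have hsub2 : σ ∩ Finset.Icc 1 r ⊆ σ.filter (· < y) := by
      intro z hz
      rcases Finset.mem_inter.mp hz with ⟨h1, h2⟩
      exact Finset.mem_filter.mpr ⟨h1, lt_of_le_of_lt (Finset.mem_Icc.mp h2).2 hy⟩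
    have := Finset.card_le_card hsub2
    rw [hsint, hyrank] at this
    have : (x + S) % r = (S + x) % r := by rw [Nat.add_comm]
    omega
  have hy1 : 1 ≤ y := (Finset.mem_Icc.mp (hσsub hyσ)).1
  -- assemble
  simp only [OmegaEdges, Finset.mem_filter]
  refine ⟨Finset.mem_powersetCard.mpr ⟨hσsub, hσcard⟩,
    (x + S) % r + 1, Finset.mem_Icc.mpr ⟨by omega, by omega⟩, y, hyσ, ?_, ?_, ?_⟩
  · simpa using hyrank
  · simp [hsum]
  · simp only [Sset]
    exact Finset.mem_Icc.mpr ⟨by omega, by omega⟩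

/-- every `(r-1)`-element subset `τ` of `{1,...,rd}` extends, by some
`x ∈ {1,...,r}` with `x ∉ τ`, to a hyperedge of `Ω_1^{(r,d)}`; i.e. the set of
`(r-1)`-faces of `Ω_1^{(r,d)}` is the set of all `(r-1)`-element subsets of `{1,...,rd}`. -/
theorem stmt2 (r d : ℕ) (hr : 1 ≤ r) (hd : 1 ≤ d) :
    (∀ τ : Finset ℕ, τ ⊆ Finset.Icc 1 (r * d) → τ.card = r - 1 →
      ∃ x ∈ Finset.Icc 1 r, x ∉ τ ∧ insert x τ ∈ OmegaEdges r d 1) ∧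
    ((Finset.Icc 1 (r * d)).powersetCard (r - 1)).filter
        (fun τ => ∃ σ ∈ OmegaEdges r d 1, τ ⊆ σ)
      = (Finset.Icc 1 (r * d)).powersetCard (r - 1) := by

  constructor
  · exact fun τ hτ hc => main_ext r d hr hd τ hτ hc
  · apply Finset.filter_true_of_mem
    intro τ hτ
    rcases Finset.mem_powersetCard.mp hτ with ⟨hsub, hc⟩
    obtain ⟨x, _, hxτ, hedge⟩ := main_ext r d hr hd τ hsub hc
    exact ⟨insert x τ, hedge, Finset.subset_insert x τ⟩
end

section
/- For every 1 ≤ a ≤ d and every 1 ≤ s ≤ r−1, every s-element subset of {1,…,rd} is contained in some hyperedge of Ω_a^{(r,d)}; equivalently, the number of s-faces of Ω_a^{(r,d)} equals the binomial coefficient C(rd, s). Hence the d-partition (Ω_1^{(r,d)},…,Ω_d^{(r,d)}) of K_{rd}^{(r)} is pre-homogeneous. -/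
open Finset
open scoped Classical

lemma exists_nth (σ : Finset ℕ) (p : ℕ) (hp : p < σ.card) :
    ∃ x ∈ σ, (σ.filter (· < x)).card = p := by
  induction p generalizing σ with
  | zero =>
    have hne : σ.Nonempty := Finset.card_pos.mp (by omega)
    refine ⟨σ.min' hne, σ.min'_mem hne, ?_⟩
    rw [Finset.card_eq_zero, Finset.filter_eq_empty_iff]
    intro y hy
    exact not_lt.mpr (σ.min'_le y hy)
  | succ p ih =>
    have hne : σ.Nonempty := Finset.card_pos.mp (by omega)
    set x0 := σ.min' hne with hx0
    have hx0m : x0 ∈ σ := σ.min'_mem hne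
    have hc : (σ.erase x0).card = σ.card - 1 := Finset.card_erase_of_mem hx0m
    obtain ⟨x, hx, hfx⟩ := ih (σ.erase x0) (by omega)
    have hxσ : x ∈ σ := Finset.mem_of_mem_erase hx
    have hx0x : x0 < x :=
      lt_of_le_of_ne (σ.min'_le x hxσ) (Ne.symm (Finset.ne_of_mem_erase hx))
    refine ⟨x, hxσ, ?_⟩
    have : σ.filter (· < x) = insert x0 ((σ.erase x0).filter (· < x)) := by
      ext y
      simp only [Finset.mem_filter, Finset.mem_insert, Finset.mem_erase]
      constructor
      · rintro ⟨hy, hyx⟩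
        by_cases h : y = x0
        · exact Or.inl h
        · exact Or.inr ⟨⟨h, hy⟩, hyx⟩
      · rintro (rfl | ⟨⟨_, hy⟩, hyx⟩)
        · exact ⟨hx0m, hx0x⟩
        · exact ⟨hy, hyx⟩
    rw [this, Finset.card_insert_of_notMem, hfx]
    intro h
    exact (Finset.ne_of_mem_erase (Finset.mem_of_mem_filter _ h)) rfl

lemma key_ext (r d b : ℕ) (hr : 1 ≤ r) (hbd : b + 1 ≤ d) (s : ℕ) (hs1 : 1 ≤ s)
    (hsr : s < r) (τ : Finset ℕ) (hτ : τ ⊆ Finset.Icc 1 (r * d)) (hτc : τ.card = s) :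
    ∃ σ ∈ OmegaEdges r d (b + 1), τ ⊆ σ := by
  have hSset : Sset r (b + 1) = Finset.Icc (r * b + 1) (r * b + r) := by
    simp [Sset, Nat.mul_succ]
  set S : Finset ℕ := Finset.Icc (r * b + 1) (r * b + r) with hSdef
  have hrbd : r * b + r ≤ r * d := by
    have := Nat.mul_le_mul_left r hbd
    rw [Nat.mul_succ] at this; exact this
  have hScard : S.card = r := by rw [hSdef, Nat.card_Icc]; omega
  have hSmem : ∀ y ∈ S, r * b + 1 ≤ y ∧ y ≤ r * b + r := by
    intro y hy; rw [hSdef, Finset.mem_Icc] at hy; exact hy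
  have hSsub : S ⊆ Finset.Icc 1 (r * d) := by
    intro y hy; obtain ⟨h1, h2⟩ := hSmem y hy
    rw [Finset.mem_Icc]; omega
  obtain ⟨k, hkdef⟩ : ∃ k, (S ∩ τ).card = k := ⟨_, rfl⟩
  have hks : k ≤ s := by
    rw [← hkdef, ← hτc]; exact Finset.card_le_card Finset.inter_subset_right
  set B := S \ τ with hBdef
  have hBcard : B.card = r - k := by
    have := Finset.card_sdiff_add_card_inter S τ
    rw [hScard, hkdef, ← hBdef] at this; omega
  obtain ⟨A₀, hA₀B, hA₀c⟩ := Finset.exists_subset_card_eq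
    (show r - s - 1 ≤ B.card by rw [hBcard]; omega)
  have hA₀S : A₀ ⊆ S := hA₀B.trans (Finset.sdiff_subset)
  have hA₀τ : Disjoint A₀ τ := by
    refine Finset.disjoint_left.mpr fun y hy hyτ => ?_
    exact (Finset.mem_sdiff.mp (hA₀B hy)).2 hyτ
  set X := B \ A₀ with hXdef
  have hXcard : X.card = s - k + 1 := by
    rw [hXdef, Finset.card_sdiff_of_subset hA₀B, hBcard, hA₀c]; omega
  obtain ⟨m, hmdef⟩ : ∃ m, (τ.filter (· ≤ r * b)).card = m := ⟨_, rfl⟩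
  obtain ⟨c, hcdef⟩ : ∃ c, c = k + (r - s) := ⟨_, rfl⟩
  have hmk : m + k ≤ s := by
    have hdis : Disjoint (τ.filter (· ≤ r * b)) (S ∩ τ) := by
      refine Finset.disjoint_left.mpr fun y hy hyS => ?_
      have h1 := (Finset.mem_filter.mp hy).2
      have h2 := (hSmem y (Finset.mem_inter.mp hyS).1).1
      omega
    have hsub : (τ.filter (· ≤ r * b)) ∪ (S ∩ τ) ⊆ τ :=
      Finset.union_subset (Finset.filter_subset _ _) (Finset.inter_subset_right)
    have := Finset.card_le_card hsub
    rw [Finset.card_union_of_disjoint hdis, hτc, hmdef, hkdef] at this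
    omega
  set S₀ := (∑ i ∈ τ, i) + (∑ i ∈ A₀, i) with hS₀
  set R := X.image (fun x => (S₀ + x) % r) with hRdef
  have hinj : ∀ x ∈ X, ∀ y ∈ X, (S₀ + x) % r = (S₀ + y) % r → x = y := by
    intro x hx y hy h
    have hxS := hSmem x (Finset.sdiff_subset (Finset.sdiff_subset hx))
    have hyS := hSmem y (Finset.sdiff_subset (Finset.sdiff_subset hy))
    have hmod : x % r = y % r := by
      have h1 : (S₀ + x) % r = (S₀ + y) % r := h
      have := Nat.ModEq.add_left_cancel' S₀ (h1 : Nat.ModEq r (S₀ + x) (S₀ + y))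
      exact this
    rcases le_total x y with hle | hle
    · have hdvd : r ∣ y - x := (Nat.modEq_iff_dvd' hle).mp hmod
      rcases Nat.eq_zero_or_pos (y - x) with h0 | h0
      · omega
      · have := Nat.le_of_dvd h0 hdvd; omega
    · have hdvd : r ∣ x - y := (Nat.modEq_iff_dvd' hle).mp hmod.symm
      rcases Nat.eq_zero_or_pos (x - y) with h0 | h0
      · omega
      · have := Nat.le_of_dvd h0 hdvd; omega
  have hRcard : R.card = s - k + 1 := by
    rw [hRdef, Finset.card_image_of_injOn hinj, hXcard]
  set T := Finset.Icc m (m + c - 1) with hTdef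
  have hTcard : T.card = c := by rw [hTdef, Nat.card_Icc]; omega
  have hmcr : m + c ≤ r := by omega
  have hTr : T ⊆ Finset.range r := by
    intro y hy; rw [hTdef, Finset.mem_Icc] at hy
    rw [Finset.mem_range]; omega
  have hRr : R ⊆ Finset.range r := by
    intro y hy
    obtain ⟨x, _, rfl⟩ := Finset.mem_image.mp hy
    rw [Finset.mem_range]; exact Nat.mod_lt _ (by omega)
  have hnon : (R ∩ T).Nonempty := by
    by_contra h
    rw [Finset.not_nonempty_iff_eq_empty] at h
    have hdis : Disjoint R T := Finset.disjoint_iff_inter_eq_empty.mpr h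
    have h1 := Finset.card_le_card (Finset.union_subset hRr hTr)
    rw [Finset.card_union_of_disjoint hdis, Finset.card_range, hRcard, hTcard] at h1
    omega
  obtain ⟨p, hp⟩ := hnon
  have hpR := Finset.mem_inter.mp hp |>.1
  have hpT := Finset.mem_inter.mp hp |>.2
  rw [hTdef, Finset.mem_Icc] at hpT
  obtain ⟨x, hxX, hxval⟩ := Finset.mem_image.mp hpR
  have hxB : x ∈ B := Finset.sdiff_subset hxX
  have hxS : x ∈ S := Finset.sdiff_subset hxB
  have hxτ : x ∉ τ := (Finset.mem_sdiff.mp hxB).2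
  have hxA₀ : x ∉ A₀ := (Finset.mem_sdiff.mp hxX).2
  set σ := insert x (τ ∪ A₀) with hσdef
  have hxnotin : x ∉ τ ∪ A₀ := by
    rw [Finset.mem_union]; rintro (h | h); exacts [hxτ h, hxA₀ h]
  have hσcard : σ.card = r := by
    rw [hσdef, Finset.card_insert_of_notMem hxnotin,
      Finset.card_union_of_disjoint hA₀τ.symm, hτc, hA₀c]
    omega
  have hσsub : σ ⊆ Finset.Icc 1 (r * d) := by
    rw [hσdef]
    exact Finset.insert_subset (hSsub hxS)
      (Finset.union_subset hτ (hA₀S.trans hSsub))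
  have hσsum : (∑ i ∈ σ, i) = S₀ + x := by
    rw [hσdef, Finset.sum_insert hxnotin, Finset.sum_union hA₀τ.symm, hS₀]
    omega
  have hpr : p < r := by omega
  have hτσ : τ ⊆ σ := fun y hy =>
    Finset.mem_insert_of_mem (Finset.mem_union_left _ hy)
  obtain ⟨x', hx'σ, hx'c⟩ := exists_nth σ p (by omega)
  -- membership characterisation of σ
  have hσmem : ∀ y, y ∈ σ ↔ y = x ∨ y ∈ τ ∨ y ∈ A₀ := by
    intro y; rw [hσdef]; simp [Finset.mem_insert, Finset.mem_union]
  -- F1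
  have F1 : (σ.filter (· ≤ r * b)).card = m := by
    have : σ.filter (· ≤ r * b) = τ.filter (· ≤ r * b) := by
      ext y
      simp only [Finset.mem_filter]
      constructor
      · rintro ⟨hy, hyb⟩
        rcases (hσmem y).mp hy with rfl | hy | hy
        · exact absurd (hSmem y hxS).1 (by omega)
        · exact ⟨hy, hyb⟩
        · exact absurd (hSmem y (hA₀S hy)).1 (by omega)
      · rintro ⟨hy, hyb⟩
        exact ⟨(hσmem y).mpr (Or.inr (Or.inl hy)), hyb⟩
    rw [this]; exact hmdef
  -- F2
  have F2 : (σ.filter (· ≤ r * b + r)).card = m + c := by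
    have hτf : τ.filter (· ≤ r * b + r) = τ.filter (· ≤ r * b) ∪ (S ∩ τ) := by
      ext y
      simp only [Finset.mem_filter, Finset.mem_union, Finset.mem_inter, hSdef,
        Finset.mem_Icc]
      constructor
      · rintro ⟨hy, hyb⟩
        by_cases h : y ≤ r * b
        · exact Or.inl ⟨hy, h⟩
        · exact Or.inr ⟨⟨by omega, hyb⟩, hy⟩
      · rintro (⟨hy, hyb⟩ | ⟨⟨h1, h2⟩, hy⟩)
        · exact ⟨hy, by omega⟩
        · exact ⟨hy, h2⟩
    have hdisf : Disjoint (τ.filter (· ≤ r * b)) (S ∩ τ) := by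
      refine Finset.disjoint_left.mpr fun y hy hyS => ?_
      have h1 := (Finset.mem_filter.mp hy).2
      have h2 := (hSmem y (Finset.mem_inter.mp hyS).1).1
      omega
    have hτfc : (τ.filter (· ≤ r * b + r)).card = m + k := by
      rw [hτf, Finset.card_union_of_disjoint hdisf, hmdef, hkdef]
    have hσf : σ.filter (· ≤ r * b + r) =
        insert x (τ.filter (· ≤ r * b + r) ∪ A₀) := by
      ext y
      simp only [Finset.mem_filter, Finset.mem_insert, Finset.mem_union]
      constructor
      · rintro ⟨hy, hyb⟩
        rcases (hσmem y).mp hy with rfl | hy | hy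
        · exact Or.inl rfl
        · exact Or.inr (Or.inl ⟨hy, hyb⟩)
        · exact Or.inr (Or.inr hy)
      · rintro (rfl | ⟨hy, hyb⟩ | hy)
        · exact ⟨(hσmem y).mpr (Or.inl rfl), (hSmem y hxS).2⟩
        · exact ⟨(hσmem y).mpr (Or.inr (Or.inl hy)), hyb⟩
        · exact ⟨(hσmem y).mpr (Or.inr (Or.inr hy)), (hSmem y (hA₀S hy)).2⟩
    have hxnotin2 : x ∉ τ.filter (· ≤ r * b + r) ∪ A₀ := by
      rw [Finset.mem_union]
      rintro (h | h)
      · exact hxτ (Finset.mem_of_mem_filter _ h)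
      · exact hxA₀ h
    have hdis2 : Disjoint (τ.filter (· ≤ r * b + r)) A₀ := by
      refine Finset.disjoint_left.mpr fun y hy hyA => ?_
      exact (Finset.disjoint_right.mp hA₀τ) (Finset.mem_of_mem_filter _ hy) hyA
    rw [hσf, Finset.card_insert_of_notMem hxnotin2,
      Finset.card_union_of_disjoint hdis2, hτfc, hA₀c]
    omega
  -- x' is in S
  have hx'lb : r * b + 1 ≤ x' := by
    by_contra h
    push_neg at h
    have hsub2 : insert x' (σ.filter (· < x')) ⊆ σ.filter (· ≤ r * b) := by
      intro y hy
      rcases Finset.mem_insert.mp hy with rfl | hy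
      · exact Finset.mem_filter.mpr ⟨hx'σ, by omega⟩
      · obtain ⟨hyσ, hyx⟩ := Finset.mem_filter.mp hy
        exact Finset.mem_filter.mpr ⟨hyσ, by omega⟩
    have hcard2 := Finset.card_le_card hsub2
    rw [Finset.card_insert_of_notMem (by
      intro hmem; exact absurd (Finset.mem_filter.mp hmem).2 (lt_irrefl x')),
      hx'c, F1] at hcard2
    omega
  have hx'ub : x' ≤ r * b + r := by
    by_contra h
    push_neg at h
    have hsub2 : σ.filter (· ≤ r * b + r) ⊆ σ.filter (· < x') := by
      intro y hy
      obtain ⟨hyσ, hyb⟩ := Finset.mem_filter.mp hy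
      exact Finset.mem_filter.mpr ⟨hyσ, by omega⟩
    have hcard2 := Finset.card_le_card hsub2
    rw [F2, hx'c] at hcard2
    omega
  refine ⟨σ, ?_, hτσ⟩
  simp only [OmegaEdges, Finset.mem_filter, Finset.mem_powersetCard]
  refine ⟨⟨hσsub, hσcard⟩, p + 1, Finset.mem_Icc.mpr ⟨by omega, by omega⟩,
    x', hx'σ, by simpa using hx'c, ?_, ?_⟩
  · rw [hσsum]
    simpa using hxval
  · rw [hSset, Finset.mem_Icc]
    exact ⟨hx'lb, hx'ub⟩


/-- for every `1 ≤ a ≤ d` and `1 ≤ s ≤ r-1`, every `s`-element subset of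
`{1,...,rd}` is contained in some hyperedge of `Ω_a^{(r,d)}`; equivalently the number of
`s`-faces of `Ω_a^{(r,d)}` is `C(rd, s)`.  Hence the partition is pre-homogeneous. -/
theorem stmt3 (r d : ℕ) (hr : 1 ≤ r) (hd : 1 ≤ d) :
    ∀ a : ℕ, 1 ≤ a → a ≤ d → ∀ s : ℕ, 1 ≤ s → s ≤ r - 1 →
      (∀ τ : Finset ℕ, τ ⊆ Finset.Icc 1 (r * d) → τ.card = s →
        ∃ σ ∈ OmegaEdges r d a, τ ⊆ σ) ∧
      (((Finset.Icc 1 (r * d)).powersetCard s).filter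
          (fun τ => ∃ σ ∈ OmegaEdges r d a, τ ⊆ σ)).card = (r * d).choose s := by
  intro a ha had s hs1 hs2
  obtain ⟨b, rfl⟩ : ∃ b, a = b + 1 := ⟨a - 1, by omega⟩
  have hkey := key_ext r d b hr had s hs1 (by omega)
  refine ⟨hkey, ?_⟩
  rw [Finset.filter_true_of_mem, Finset.card_powersetCard, Nat.card_Icc]
  · congr 1 <;> omega
  · intro τ hτ
    obtain ⟨hsub, hcard⟩ := Finset.mem_powersetCard.mp hτ
    exact hkey τ hsub hcard
end

section
/- For every 1 ≤ a ≤ d, the number of hyperedges of Ω_a^{(r,d)} equals the binomial coefficient C(rd−1, r−1), which equals (1/d)·C(rd, r). Hence the d-partition (Ω_1^{(r,d)},…,Ω_d^{(r,d)}) of K_{rd}^{(r)} is homogeneous. -/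
open Finset
open scoped Classical

namespace Stmt4Aux

/-- the sum of a finset of naturals, mod `r` -/
def csum (r : ℕ) (σ : Finset ℕ) : ℕ := (∑ i ∈ σ, i) % r

/-- `Kc r σ b` = number of elements of `σ` that are `≤ r*b`. -/
noncomputable def Kc (r : ℕ) (σ : Finset ℕ) (b : ℕ) : ℕ := (σ.filter (fun x => x ≤ r * b)).card

/-- `kc r σ b` = number of elements of `σ` in block `b`, i.e. in `(r(b-1), rb]`. -/
noncomputable def kc (r : ℕ) (σ : Finset ℕ) (b : ℕ) : ℕ :=
  (σ.filter (fun x => r * (b - 1) < x ∧ x ≤ r * b)).card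

lemma rank_lt (σ : Finset ℕ) {x : ℕ} (hx : x ∈ σ) : (σ.filter (· < x)).card < σ.card := by
  apply Finset.card_lt_card
  constructor
  · exact Finset.filter_subset _ _
  · intro h
    have := (Finset.mem_filter.mp (h hx)).2
    omega

lemma rank_injOn (σ : Finset ℕ) : ∀ x ∈ σ, ∀ y ∈ σ,
    (σ.filter (· < x)).card = (σ.filter (· < y)).card → x = y := by
  have key : ∀ x ∈ σ, ∀ y ∈ σ, x < y →
      (σ.filter (· < x)).card < (σ.filter (· < y)).card := by
    intro x hx y hy hxy
    apply Finset.card_lt_card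
    constructor
    · intro z hz
      rcases Finset.mem_filter.mp hz with ⟨hz1, hz2⟩
      exact Finset.mem_filter.mpr ⟨hz1, by omega⟩
    · intro h
      have hxmem : x ∈ σ.filter (· < y) := Finset.mem_filter.mpr ⟨hx, hxy⟩
      have := (Finset.mem_filter.mp (h hxmem)).2
      omega
  intro x hx y hy hcard
  rcases lt_trichotomy x y with h | h | h
  · exact absurd hcard (Nat.ne_of_lt (key x hx y hy h))
  · exact h
  · exact absurd hcard.symm (Nat.ne_of_lt (key y hy x hx h))

lemma rank_surj (σ : Finset ℕ) {i : ℕ} (hi : i < σ.card) :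
    ∃ x ∈ σ, (σ.filter (· < x)).card = i := by
  set f : ℕ → ℕ := fun x => (σ.filter (· < x)).card with hf
  have himg : σ.image f = Finset.range σ.card := by
    apply Finset.eq_of_subset_of_card_le
    · intro j hj
      rcases Finset.mem_image.mp hj with ⟨x, hx, rfl⟩
      exact Finset.mem_range.mpr (rank_lt σ hx)
    · rw [Finset.card_range, Finset.card_image_of_injOn]
      intro x hx y hy h
      exact rank_injOn σ x hx y hy h
  have : i ∈ σ.image f := by
    rw [himg]; exact Finset.mem_range.mpr hi
  rcases Finset.mem_image.mp this with ⟨x, hx, hfx⟩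
  exact ⟨x, hx, hfx⟩

lemma le_rmul_iff {r : ℕ} (hr : 0 < r) {x : ℕ} (hx : 1 ≤ x) (b : ℕ) :
    x ≤ r * b ↔ (x - 1) / r < b := by
  have h1 : r * ((x-1)/r) + (x-1) % r = x - 1 := by
    exact Nat.div_add_mod (x-1) r
  have h2 : (x-1) % r < r := Nat.mod_lt _ hr
  constructor
  · intro h
    by_contra hb
    push_neg at hb
    have : r * b ≤ r * ((x-1)/r) := Nat.mul_le_mul_left r hb
    omega
  · intro h
    have : (x-1)/r + 1 ≤ b := h
    have := Nat.mul_le_mul_left r this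
    rw [Nat.mul_add, Nat.mul_one] at this
    omega

lemma Kc_mono (r : ℕ) (σ : Finset ℕ) {b b' : ℕ} (h : b ≤ b') : Kc r σ b ≤ Kc r σ b' := by
  apply Finset.card_le_card
  intro x hx
  rcases Finset.mem_filter.mp hx with ⟨hx1, hx2⟩
  have : r * b ≤ r * b' := Nat.mul_le_mul_left r h
  exact Finset.mem_filter.mpr ⟨hx1, by omega⟩

lemma Kc_le (r : ℕ) (σ : Finset ℕ) (b : ℕ) : Kc r σ b ≤ σ.card :=
  Finset.card_le_card (Finset.filter_subset _ _)

lemma Kc_zero (r : ℕ) {σ : Finset ℕ} {n : ℕ} (hσ : σ ⊆ Finset.Icc 1 n) : Kc r σ 0 = 0 := by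
  rw [Kc, Finset.card_eq_zero]
  apply Finset.filter_eq_empty_iff.mpr
  intro x hx
  have := Finset.mem_Icc.mp (hσ hx)
  omega

lemma Kc_top {r d : ℕ} {σ : Finset ℕ} (hσ : σ ⊆ Finset.Icc 1 (r * d)) : Kc r σ d = σ.card := by
  rw [Kc]
  congr 1
  apply Finset.filter_eq_self.mpr
  intro x hx
  exact (Finset.mem_Icc.mp (hσ hx)).2

lemma Kc_split (r : ℕ) (σ : Finset ℕ) (a' : ℕ) : Kc r σ (a' + 1) = Kc r σ a' + kc r σ (a' + 1) := by
  rw [Kc, Kc, kc]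
  have hsplit : σ.filter (fun x => x ≤ r * (a' + 1)) =
      σ.filter (fun x => x ≤ r * a') ∪ σ.filter (fun x => r * (a' + 1 - 1) < x ∧ x ≤ r * (a' + 1)) := by
    rw [← Finset.filter_or]
    apply Finset.filter_congr
    intro x hx
    have : r * a' ≤ r * (a' + 1) := Nat.mul_le_mul_left r (by omega)
    simp only [Nat.add_sub_cancel]
    constructor
    · intro h; omega
    · intro h; omega
  rw [hsplit, Finset.card_union_of_disjoint]
  rw [Finset.disjoint_left]
  intro x hx1 hx2
  have h1 := (Finset.mem_filter.mp hx1).2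
  have h2 := (Finset.mem_filter.mp hx2).2
  simp only [Nat.add_sub_cancel] at h2
  omega


/-- membership in a block interval determines the block uniquely -/
lemma block_unique {r : ℕ} (hr : 0 < r) (σ : Finset ℕ) {a a' : ℕ} (c : ℕ)
    (h1 : Kc r σ (a - 1) ≤ c) (h2 : c < Kc r σ a)
    (h1' : Kc r σ (a' - 1) ≤ c) (h2' : c < Kc r σ a') (ha : 1 ≤ a) (ha' : 1 ≤ a') : a = a' := by
  by_contra hne
  rcases Nat.lt_or_ge a a' with h | h
  · have : Kc r σ a ≤ Kc r σ (a' - 1) := Kc_mono r σ (by omega)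
    omega
  · have : Kc r σ a' ≤ Kc r σ (a - 1) := Kc_mono r σ (by omega)
    omega

/-- the key characterization: an `r`-subset `σ` of `[1, rd]` is in `Ω_a` iff
`K_{a-1}(σ) ≤ csum σ < K_a(σ)`. -/
lemma omega_mem_iff {r d a : ℕ} (hr : 1 ≤ r) (ha : 1 ≤ a) (had : a ≤ d)
    {σ : Finset ℕ} (hσsub : σ ⊆ Finset.Icc 1 (r * d)) (hσcard : σ.card = r) :
    ((∃ t ∈ Finset.Icc 1 r, ∃ x ∈ σ,
      (σ.filter (· < x)).card = t - 1 ∧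
      (∑ i ∈ σ, i) % r = t - 1 ∧
      x ∈ Sset r a) ↔ (Kc r σ (a - 1) ≤ csum r σ ∧ csum r σ < Kc r σ a)) := by
  have hc : csum r σ < r := Nat.mod_lt _ (by omega)
  -- forward direction helper: if x ∈ σ has rank c and x ∈ Sset r b (1 ≤ b), then K(b-1) ≤ c < K b
  have fwd : ∀ b : ℕ, 1 ≤ b → ∀ x ∈ σ, (σ.filter (· < x)).card = csum r σ →
      x ∈ Sset r b → Kc r σ (b - 1) ≤ csum r σ ∧ csum r σ < Kc r σ b := by
    intro b hb x hx hrank hxS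
    rw [Sset, Finset.mem_Icc] at hxS
    have hb1 : r * (b - 1) + r = r * b := by
      cases' b with b'
      · omega
      · simp [Nat.mul_add, Nat.add_sub_cancel, Nat.mul_succ]
    constructor
    · rw [← hrank]
      apply Finset.card_le_card
      intro y hy
      rcases Finset.mem_filter.mp hy with ⟨hy1, hy2⟩
      exact Finset.mem_filter.mpr ⟨hy1, by omega⟩
    · rw [← hrank]
      apply Finset.card_lt_card
      constructor
      · intro y hy
        rcases Finset.mem_filter.mp hy with ⟨hy1, hy2⟩
        exact Finset.mem_filter.mpr ⟨hy1, by omega⟩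
      · intro hcon
        have hxmem : x ∈ σ.filter (fun y => y ≤ r * b) := Finset.mem_filter.mpr ⟨hx, by omega⟩
        have := (Finset.mem_filter.mp (hcon hxmem)).2
        omega
  constructor
  · rintro ⟨t, ht, x, hx, hrank, hsum, hxS⟩
    have htIcc := Finset.mem_Icc.mp ht
    have hrank' : (σ.filter (· < x)).card = csum r σ := by
      rw [hrank, csum, hsum]
    exact fwd a ha x hx hrank' hxS
  · rintro ⟨h1, h2⟩
    have hcσ : csum r σ < σ.card := by
      have := Kc_le r σ a
      omega
    rcases rank_surj σ hcσ with ⟨x, hx, hrank⟩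
    have hxIcc := Finset.mem_Icc.mp (hσsub hx)
    -- x belongs to block a' := (x-1)/r + 1
    have hmod : r * ((x-1)/r) + (x-1) % r = x - 1 := Nat.div_add_mod (x-1) r
    have hmlt : (x-1) % r < r := Nat.mod_lt _ (by omega)
    have hxS' : x ∈ Sset r ((x - 1) / r + 1) := by
      rw [Sset, Finset.mem_Icc]
      simp only [Nat.add_sub_cancel]
      rw [Nat.mul_add, Nat.mul_one]
      generalize hA : r * ((x-1)/r) = A at hmod ⊢
      omega
    have ha'1 : 1 ≤ (x - 1) / r + 1 := Nat.succ_le_succ (Nat.zero_le _)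
    have ha'd : (x - 1) / r + 1 ≤ d := by
      have hxn : x ≤ r * d := hxIcc.2
      exact (le_rmul_iff (by omega : 0 < r) (by omega : 1 ≤ x) d).mp hxn
    have hKK := fwd ((x - 1) / r + 1) ha'1 x hx hrank hxS'
    have haa : a = (x - 1) / r + 1 :=
      block_unique (by omega) σ (csum r σ) h1 h2 hKK.1 hKK.2 ha ha'1
    refine ⟨csum r σ + 1, ?_, x, hx, ?_, ?_, ?_⟩
    · rw [Finset.mem_Icc]; omega
    · rw [Nat.add_sub_cancel]; exact hrank
    · rw [Nat.add_sub_cancel]; rfl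
    · rw [haa]; exact hxS'

lemma omega_eq_filter {r d a : ℕ} (hr : 1 ≤ r) (ha : 1 ≤ a) (had : a ≤ d) :
    OmegaEdges r d a = ((Finset.Icc 1 (r * d)).powersetCard r).filter
      (fun σ => Kc r σ (a - 1) ≤ csum r σ ∧ csum r σ < Kc r σ a) := by
  rw [OmegaEdges]
  ext σ
  simp only [Finset.mem_filter]
  apply and_congr_right
  intro hσ
  rw [Finset.mem_powersetCard] at hσ
  exact omega_mem_iff hr ha had hσ.1 hσ.2


/-- transporting a cardinality of a filtered powerset along an injective self-map -/
lemma card_filter_transport (n r : ℕ) (f : ℕ → ℕ)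
    (hmaps : ∀ x ∈ Finset.Icc 1 n, f x ∈ Finset.Icc 1 n)
    (hinj : ∀ x ∈ Finset.Icc 1 n, ∀ y ∈ Finset.Icc 1 n, f x = f y → x = y)
    (p : Finset ℕ → Prop) [DecidablePred p] [DecidablePred (fun σ : Finset ℕ => p (σ.image f))] :
    (((Finset.Icc 1 n).powersetCard r).filter (fun σ => p (σ.image f))).card =
    (((Finset.Icc 1 n).powersetCard r).filter p).card := by
  have hΦmem : ∀ σ ∈ (Finset.Icc 1 n).powersetCard r,
      σ.image f ∈ (Finset.Icc 1 n).powersetCard r := by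
    intro σ hσ
    rw [Finset.mem_powersetCard] at hσ ⊢
    constructor
    · intro y hy
      rcases Finset.mem_image.mp hy with ⟨x, hx, rfl⟩
      exact hmaps x (hσ.1 hx)
    · rw [Finset.card_image_of_injOn, hσ.2]
      intro x hx y hy hxy
      exact hinj x (hσ.1 hx) y (hσ.1 hy) hxy
  have hΦinj : ∀ σ ∈ (Finset.Icc 1 n).powersetCard r,
      ∀ τ ∈ (Finset.Icc 1 n).powersetCard r, σ.image f = τ.image f → σ = τ := by
    intro σ hσ τ hτ h
    rw [Finset.mem_powersetCard] at hσ hτ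
    apply Finset.Subset.antisymm
    · intro x hx
      have : f x ∈ τ.image f := h ▸ Finset.mem_image_of_mem f hx
      rcases Finset.mem_image.mp this with ⟨y, hy, hxy⟩
      rw [← hinj y (hτ.1 hy) x (hσ.1 hx) hxy]
      exact hy
    · intro x hx
      have : f x ∈ σ.image f := h.symm ▸ Finset.mem_image_of_mem f hx
      rcases Finset.mem_image.mp this with ⟨y, hy, hxy⟩
      rw [← hinj y (hσ.1 hy) x (hτ.1 hx) hxy]
      exact hy
  have himage : ((Finset.Icc 1 n).powersetCard r).image (fun σ => σ.image f)
      = (Finset.Icc 1 n).powersetCard r := by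
    apply Finset.eq_of_subset_of_card_le
    · intro τ hτ
      rcases Finset.mem_image.mp hτ with ⟨σ, hσ, rfl⟩
      exact hΦmem σ hσ
    · rw [Finset.card_image_of_injOn hΦinj]
  apply Finset.card_bij (fun σ _ => σ.image f)
  · intro σ hσ
    rw [Finset.mem_filter] at hσ ⊢
    exact ⟨hΦmem σ hσ.1, hσ.2⟩
  · intro σ hσ τ hτ h
    rw [Finset.mem_filter] at hσ hτ
    exact hΦinj σ hσ.1 τ hτ.1 h
  · intro τ hτ
    rw [Finset.mem_filter] at hτ
    have : τ ∈ ((Finset.Icc 1 n).powersetCard r).image (fun σ => σ.image f) := by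
      rw [himage]; exact hτ.1
    rcases Finset.mem_image.mp this with ⟨σ, hσ, hστ⟩
    refine ⟨σ, Finset.mem_filter.mpr ⟨hσ, ?_⟩, hστ⟩
    rw [hστ]; exact hτ.2

/-! ### the block-rotation map -/

/-- rotate each element of `[1, m]` one step forward within its length-`r` block -/
def rotFn (r m x : ℕ) : ℕ :=
  if 1 ≤ x ∧ x ≤ m then r * ((x-1)/r) + ((x-1) % r + 1) % r + 1 else x

lemma rot_eq {r m x : ℕ} (hx : 1 ≤ x) (hxm : x ≤ m) :
    rotFn r m x = r * ((x-1)/r) + ((x-1) % r + 1) % r + 1 := by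
  rw [rotFn, if_pos ⟨hx, hxm⟩]

lemma rot_eq' {r m x : ℕ} (hx : ¬ (1 ≤ x ∧ x ≤ m)) : rotFn r m x = x := by
  rw [rotFn, if_neg hx]

/-- detailed description of the rotation on the guard region -/
lemma rot_spec {r m x : ℕ} (hr : 0 < r) (hx : 1 ≤ x) (hxm : x ≤ m) :
    (x - 1) % r + 1 < r ∧ rotFn r m x = x + 1 ∨
    (x - 1) % r + 1 = r ∧ rotFn r m x = r * ((x-1)/r) + 1 := by
  have hq : r * ((x-1)/r) + (x-1) % r = x - 1 := Nat.div_add_mod (x-1) r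
  have hs : (x-1) % r < r := Nat.mod_lt _ hr
  rcases Nat.lt_or_ge ((x-1) % r + 1) r with h | h
  · left
    refine ⟨h, ?_⟩
    rw [rot_eq hx hxm, Nat.mod_eq_of_lt h]
    omega
  · right
    have he : (x-1) % r + 1 = r := by omega
    refine ⟨he, ?_⟩
    rw [rot_eq hx hxm, he, Nat.mod_self]

lemma rot_bounds {r m x : ℕ} (hr : 0 < r) (hx : 1 ≤ x) (hxm : x ≤ m) :
    r * ((x-1)/r) + 1 ≤ rotFn r m x ∧ rotFn r m x ≤ r * ((x-1)/r) + r := by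
  have hq : r * ((x-1)/r) + (x-1) % r = x - 1 := Nat.div_add_mod (x-1) r
  have hs : (x-1) % r < r := Nat.mod_lt _ hr
  rcases rot_spec hr hx hxm with ⟨h1, h2⟩ | ⟨h1, h2⟩ <;> rw [h2] <;> omega

lemma self_bounds {r : ℕ} (hr : 0 < r) {x : ℕ} (hx : 1 ≤ x) :
    r * ((x-1)/r) + 1 ≤ x ∧ x ≤ r * ((x-1)/r) + r := by
  have hq : r * ((x-1)/r) + (x-1) % r = x - 1 := Nat.div_add_mod (x-1) r
  have hs : (x-1) % r < r := Nat.mod_lt _ hr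
  omega

lemma rot_div {r m x : ℕ} (hr : 0 < r) (hx : 1 ≤ x) (hxm : x ≤ m) :
    (rotFn r m x - 1) / r = (x-1)/r := by
  rw [rot_eq hx hxm]
  have hu : ((x-1) % r + 1) % r < r := Nat.mod_lt _ hr
  have : r * ((x-1)/r) + ((x-1) % r + 1) % r + 1 - 1 = r * ((x-1)/r) + ((x-1) % r + 1) % r := by
    omega
  rw [this, Nat.mul_add_div hr, Nat.div_eq_of_lt hu, Nat.add_zero]

lemma rot_mod {r m x : ℕ} (hr : 0 < r) (hx : 1 ≤ x) (hxm : x ≤ m) :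
    rotFn r m x % r = (x + 1) % r := by
  have hq : r * ((x-1)/r) + (x-1) % r = x - 1 := Nat.div_add_mod (x-1) r
  rcases rot_spec hr hx hxm with ⟨h1, h2⟩ | ⟨h1, h2⟩
  · rw [h2]
  · rw [h2]
    have hx1 : x + 1 = (r * ((x-1)/r) + 1) + r := by omega
    rw [hx1, Nat.add_mod_right]

lemma rot_pos {r m x : ℕ} (hx : 1 ≤ x) : 1 ≤ rotFn r m x := by
  by_cases h : 1 ≤ x ∧ x ≤ m
  · rw [rot_eq h.1 h.2]; omega
  · rw [rot_eq' h]; exact hx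

/-- the rotation keeps the guard region `[1, r*e]` stable -/
lemma rot_guard {r e x : ℕ} (hr : 0 < r) (hx : 1 ≤ x) (hxm : x ≤ r * e) :
    rotFn r (r*e) x ≤ r * e := by
  have hb := rot_bounds hr hx hxm
  have hqe : (x-1)/r < e := (le_rmul_iff hr hx e).mp hxm
  have : r * ((x-1)/r + 1) ≤ r * e := Nat.mul_le_mul_left r hqe
  rw [Nat.mul_add, Nat.mul_one] at this
  omega

lemma rot_maps {r e n x : ℕ} (hr : 0 < r) (hen : r * e ≤ n) (hx : x ∈ Finset.Icc 1 n) :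
    rotFn r (r*e) x ∈ Finset.Icc 1 n := by
  rw [Finset.mem_Icc] at hx ⊢
  refine ⟨rot_pos hx.1, ?_⟩
  by_cases h : 1 ≤ x ∧ x ≤ r * e
  · have := rot_guard hr h.1 h.2
    omega
  · rw [rot_eq' h]; exact hx.2

lemma rot_inj {r e n : ℕ} (hr : 0 < r) (hen : r * e ≤ n) :
    ∀ x ∈ Finset.Icc 1 n, ∀ y ∈ Finset.Icc 1 n,
      rotFn r (r*e) x = rotFn r (r*e) y → x = y := by
  intro x hx y hy hxy
  rw [Finset.mem_Icc] at hx hy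
  by_cases gx : 1 ≤ x ∧ x ≤ r * e
  · by_cases gy : 1 ≤ y ∧ y ≤ r * e
    · -- both rotated; same block, then same offset
      have hbx := rot_bounds hr gx.1 gx.2
      have hby := rot_bounds hr gy.1 gy.2
      have hqeq : (x-1)/r = (y-1)/r := by
        by_contra hne
        rcases Nat.lt_or_ge ((x-1)/r) ((y-1)/r) with h | h
        · have : r * ((x-1)/r + 1) ≤ r * ((y-1)/r) := Nat.mul_le_mul_left r h
          rw [Nat.mul_add, Nat.mul_one] at this
          omega
        · have h' : (y-1)/r < (x-1)/r := by omega
          have : r * ((y-1)/r + 1) ≤ r * ((x-1)/r) := Nat.mul_le_mul_left r h'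
          rw [Nat.mul_add, Nat.mul_one] at this
          omega
      have hqx : r * ((x-1)/r) + (x-1) % r = x - 1 := Nat.div_add_mod (x-1) r
      have hqy : r * ((y-1)/r) + (y-1) % r = y - 1 := Nat.div_add_mod (y-1) r
      rw [hqeq] at hqx
      -- now compare offsets
      rcases rot_spec hr gx.1 gx.2 with ⟨h1, h2⟩ | ⟨h1, h2⟩ <;>
        rcases rot_spec hr gy.1 gy.2 with ⟨h1', h2'⟩ | ⟨h1', h2'⟩ <;>
          rw [h2, h2'] at hxy <;> rw [hqeq] at * <;> omega
    · -- x rotated stays ≤ r*e, y fixed and > r*e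
      exfalso
      have h1 := rot_guard hr gx.1 gx.2
      rw [rot_eq' gy] at hxy
      omega
  · by_cases gy : 1 ≤ y ∧ y ≤ r * e
    · exfalso
      have h1 := rot_guard hr gy.1 gy.2
      rw [rot_eq' gx] at hxy
      omega
    · rw [rot_eq' gx, rot_eq' gy] at hxy
      exact hxy


lemma rot_le_iff {r e x : ℕ} (hr : 0 < r) (hx : 1 ≤ x) (c : ℕ) :
    rotFn r (r*e) x ≤ r * c ↔ x ≤ r * c := by
  by_cases h : 1 ≤ x ∧ x ≤ r * e
  · rw [le_rmul_iff hr (rot_pos hx) c, le_rmul_iff hr hx c, rot_div hr h.1 h.2]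
  · rw [rot_eq' h]

lemma csum_image_rot {r e n : ℕ} (hr : 0 < r) (hen : r * e ≤ n) {σ : Finset ℕ}
    (hσ : σ ⊆ Finset.Icc 1 n) :
    csum r (σ.image (rotFn r (r*e))) = (csum r σ + Kc r σ e) % r := by
  have hinj : ∀ x ∈ σ, ∀ y ∈ σ, rotFn r (r*e) x = rotFn r (r*e) y → x = y :=
    fun x hx y hy h => rot_inj hr hen x (hσ hx) y (hσ hy) h
  rw [csum, Finset.sum_image hinj]
  have hpt : ∀ x ∈ σ, rotFn r (r*e) x % r = (x + if x ≤ r * e then 1 else 0) % r := by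
    intro x hx
    have hx1 : 1 ≤ x := (Finset.mem_Icc.mp (hσ hx)).1
    by_cases h : x ≤ r * e
    · rw [if_pos h]
      exact rot_mod hr hx1 h
    · rw [if_neg h, rot_eq' (by intro hc; exact h hc.2), Nat.add_zero]
  calc (∑ x ∈ σ, rotFn r (r*e) x) % r
      = (∑ x ∈ σ, rotFn r (r*e) x % r) % r := Finset.sum_nat_mod σ r _
    _ = (∑ x ∈ σ, (x + if x ≤ r * e then 1 else 0) % r) % r := by
        rw [Finset.sum_congr rfl hpt]
    _ = (∑ x ∈ σ, (x + if x ≤ r * e then 1 else 0)) % r := (Finset.sum_nat_mod σ r _).symm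
    _ = ((∑ x ∈ σ, x) + ∑ x ∈ σ, (if x ≤ r * e then 1 else 0)) % r := by
        rw [Finset.sum_add_distrib]
    _ = ((∑ x ∈ σ, x) + Kc r σ e) % r := by
        rw [Kc, Finset.card_filter]
    _ = (csum r σ + Kc r σ e) % r := by
        rw [csum]
        exact (Nat.ModEq.add_right (Kc r σ e) (Nat.mod_modEq _ r)).symm

lemma Kc_image_rot {r e n : ℕ} (hr : 0 < r) (hen : r * e ≤ n) {σ : Finset ℕ}
    (hσ : σ ⊆ Finset.Icc 1 n) (b : ℕ) :
    Kc r (σ.image (rotFn r (r*e))) b = Kc r σ b := by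
  have hinj : Set.InjOn (rotFn r (r*e)) ↑(σ.filter (fun x => rotFn r (r*e) x ≤ r * b)) := by
    intro x hx y hy h
    simp only [Finset.coe_filter, Set.mem_setOf_eq] at hx hy
    exact rot_inj hr hen x (hσ hx.1) y (hσ hy.1) h
  calc Kc r (σ.image (rotFn r (r*e))) b
      = ((σ.filter (fun x => rotFn r (r*e) x ≤ r * b)).image (rotFn r (r*e))).card := by
        rw [Kc, Finset.filter_image]
    _ = (σ.filter (fun x => rotFn r (r*e) x ≤ r * b)).card := Finset.card_image_of_injOn hinj
    _ = (σ.filter (fun x => x ≤ r * b)).card := by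
        apply congrArg Finset.card
        apply Finset.filter_congr
        intro x hx
        have hx1 : 1 ≤ x := (Finset.mem_Icc.mp (hσ hx)).1
        simp only [rot_le_iff hr hx1 b]

lemma kc_image_rot {r e n : ℕ} (hr : 0 < r) (hen : r * e ≤ n) {σ : Finset ℕ}
    (hσ : σ ⊆ Finset.Icc 1 n) (b : ℕ) :
    kc r (σ.image (rotFn r (r*e))) b = kc r σ b := by
  have hinj : Set.InjOn (rotFn r (r*e))
      ↑(σ.filter (fun x => r * (b-1) < rotFn r (r*e) x ∧ rotFn r (r*e) x ≤ r * b)) := by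
    intro x hx y hy h
    simp only [Finset.coe_filter, Set.mem_setOf_eq] at hx hy
    exact rot_inj hr hen x (hσ hx.1) y (hσ hy.1) h
  calc kc r (σ.image (rotFn r (r*e))) b
      = ((σ.filter (fun x => r * (b-1) < rotFn r (r*e) x ∧ rotFn r (r*e) x ≤ r * b)).image
          (rotFn r (r*e))).card := by
        rw [kc, Finset.filter_image]
    _ = (σ.filter (fun x => r * (b-1) < rotFn r (r*e) x ∧ rotFn r (r*e) x ≤ r * b)).card :=
        Finset.card_image_of_injOn hinj
    _ = (σ.filter (fun x => r * (b-1) < x ∧ x ≤ r * b)).card := by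
        apply congrArg Finset.card
        apply Finset.filter_congr
        intro x hx
        have hx1 : 1 ≤ x := (Finset.mem_Icc.mp (hσ hx)).1
        have h1 := rot_le_iff hr hx1 (e := e) b
        have h2 := rot_le_iff hr hx1 (e := e) (b-1)
        constructor
        · rintro ⟨hA, hB⟩
          refine ⟨?_, h1.mp hB⟩
          by_contra hcon
          push_neg at hcon
          have := h2.mpr hcon
          omega
        · rintro ⟨hA, hB⟩
          refine ⟨?_, h1.mpr hB⟩
          by_contra hcon
          push_neg at hcon
          have := h2.mp hcon
          omega

/-! ### the block-swap map -/

/-- swap block `1` with block `a` -/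
def swapFn (r a x : ℕ) : ℕ :=
  if 1 ≤ x ∧ x ≤ r then x + r * (a-1)
  else if r * (a-1) < x ∧ x ≤ r * a then x - r * (a-1)
  else x

lemma rmul_pred {r a : ℕ} (ha : 1 ≤ a) : r * a = r * (a-1) + r := by
  obtain ⟨a', rfl⟩ := Nat.exists_eq_add_of_le ha
  rw [Nat.add_sub_cancel_left, Nat.mul_add, Nat.mul_one]
  omega

lemma sw_maps {r a d x : ℕ} (hr : 0 < r) (ha : 1 ≤ a) (had : a ≤ d)
    (hx : x ∈ Finset.Icc 1 (r*d)) : swapFn r a x ∈ Finset.Icc 1 (r*d) := by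
  have hra := rmul_pred (r := r) ha
  have han : r * a ≤ r * d := Nat.mul_le_mul_left r had
  rw [Finset.mem_Icc] at hx ⊢
  rw [swapFn]
  split_ifs <;> omega

lemma sw_invol {r a d x : ℕ} (hr : 0 < r) (ha : 1 ≤ a) (had : a ≤ d)
    (hx : x ∈ Finset.Icc 1 (r*d)) : swapFn r a (swapFn r a x) = x := by
  have hra := rmul_pred (r := r) ha
  have han : r * a ≤ r * d := Nat.mul_le_mul_left r had
  rw [Finset.mem_Icc] at hx
  rcases Nat.lt_or_ge a 2 with h1 | h2
  · have haa : a = 1 := by omega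
    subst haa
    have h0 : r * (1-1) = 0 := by simp
    rw [swapFn, swapFn]
    split_ifs <;> omega
  · have hle : r ≤ r * (a-1) := by
      have h := Nat.mul_le_mul_left r (show 1 ≤ a-1 by omega)
      rwa [Nat.mul_one] at h
    rw [swapFn, swapFn]
    split_ifs <;> omega

lemma sw_inj {r a d : ℕ} (hr : 0 < r) (ha : 1 ≤ a) (had : a ≤ d) :
    ∀ x ∈ Finset.Icc 1 (r*d), ∀ y ∈ Finset.Icc 1 (r*d),
      swapFn r a x = swapFn r a y → x = y := by
  intro x hx y hy h
  have := congrArg (swapFn r a) h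
  rwa [sw_invol hr ha had hx, sw_invol hr ha had hy] at this

lemma sw_mod {r a x : ℕ} : swapFn r a x % r = x % r := by
  rw [swapFn]
  split_ifs with h1 h2
  · exact Nat.add_mul_mod_self_left x r (a-1)
  · have hx : (x - r * (a-1)) + r * (a-1) = x := by omega
    conv_rhs => rw [← hx]
    rw [Nat.add_mul_mod_self_left]
  · rfl

lemma csum_image_sw {r a d : ℕ} (hr : 0 < r) (ha : 1 ≤ a) (had : a ≤ d) {σ : Finset ℕ}
    (hσ : σ ⊆ Finset.Icc 1 (r*d)) :
    csum r (σ.image (swapFn r a)) = csum r σ := by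
  have hinj : ∀ x ∈ σ, ∀ y ∈ σ, swapFn r a x = swapFn r a y → x = y :=
    fun x hx y hy h => sw_inj hr ha had x (hσ hx) y (hσ hy) h
  rw [csum, Finset.sum_image hinj, csum]
  calc (∑ x ∈ σ, swapFn r a x) % r
      = (∑ x ∈ σ, swapFn r a x % r) % r := Finset.sum_nat_mod σ r _
    _ = (∑ x ∈ σ, x % r) % r := by
        apply congrArg (· % r)
        exact Finset.sum_congr rfl (fun x _ => sw_mod)
    _ = (∑ x ∈ σ, x) % r := (Finset.sum_nat_mod σ r _).symm

lemma sw_block_iff {r a x : ℕ} (hr : 0 < r) (ha : 1 ≤ a) (hx1 : 1 ≤ x) :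
    (r * (a-1) < swapFn r a x ∧ swapFn r a x ≤ r * a) ↔ x ≤ r := by
  have hra := rmul_pred (r := r) ha
  rcases Nat.lt_or_ge a 2 with h1 | h2
  · have haa : a = 1 := by omega
    subst haa
    have h0 : r * (1-1) = 0 := by simp
    rw [swapFn]
    split_ifs <;> omega
  · have hle : r ≤ r * (a-1) := by
      have h := Nat.mul_le_mul_left r (show 1 ≤ a-1 by omega)
      rwa [Nat.mul_one] at h
    rw [swapFn]
    split_ifs <;> omega

lemma kc_image_sw {r a d : ℕ} (hr : 0 < r) (ha : 1 ≤ a) (had : a ≤ d) {σ : Finset ℕ}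
    (hσ : σ ⊆ Finset.Icc 1 (r*d)) :
    kc r (σ.image (swapFn r a)) a = kc r σ 1 := by
  have hinj : Set.InjOn (swapFn r a)
      ↑(σ.filter (fun x => r * (a-1) < swapFn r a x ∧ swapFn r a x ≤ r * a)) := by
    intro x hx y hy h
    simp only [Finset.coe_filter, Set.mem_setOf_eq] at hx hy
    exact sw_inj hr ha had x (hσ hx.1) y (hσ hy.1) h
  calc kc r (σ.image (swapFn r a)) a
      = ((σ.filter (fun x => r * (a-1) < swapFn r a x ∧ swapFn r a x ≤ r * a)).image
          (swapFn r a)).card := by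
        rw [kc, Finset.filter_image]
    _ = (σ.filter (fun x => r * (a-1) < swapFn r a x ∧ swapFn r a x ≤ r * a)).card :=
        Finset.card_image_of_injOn hinj
    _ = (σ.filter (fun x => r * (1-1) < x ∧ x ≤ r * 1)).card := by
        apply congrArg Finset.card
        apply Finset.filter_congr
        intro x hx
        have hx1 : 1 ≤ x := (Finset.mem_Icc.mp (hσ hx)).1
        rw [sw_block_iff hr ha hx1]
        have h0 : r * (1-1) = 0 := by simp
        have h1 : r * 1 = r := Nat.mul_one r
        constructor
        · intro h; exact ⟨by omega, by omega⟩
        · intro h; omega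
    _ = kc r σ 1 := rfl


/-! ### counting -/

lemma window_iff {r c K k : ℕ} (hc : c < r) (hKk : K + k ≤ r) :
    (K ≤ (c + K) % r ∧ (c + K) % r < K + k) ↔ c < k := by
  rcases Nat.lt_or_ge (c + K) r with h | h
  · rw [Nat.mod_eq_of_lt h]; omega
  · have h2 : (c + K) % r = c + K - r := by
      rw [Nat.mod_eq_sub_mod h, Nat.mod_eq_of_lt (by omega)]
    rw [h2]; omega

lemma N_eq_Q {r d a : ℕ} (hr : 1 ≤ r) (ha : 1 ≤ a) (had : a ≤ d) :
    (((Finset.Icc 1 (r*d)).powersetCard r).filter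
        (fun σ => Kc r σ (a-1) ≤ csum r σ ∧ csum r σ < Kc r σ a)).card =
    (((Finset.Icc 1 (r*d)).powersetCard r).filter (fun σ => csum r σ < kc r σ a)).card := by
  have hrpos : 0 < r := by omega
  have hen : r * (a-1) ≤ r * d := Nat.mul_le_mul_left r (by omega)
  rw [← card_filter_transport (r*d) r (rotFn r (r*(a-1)))
    (fun x hx => rot_maps hrpos hen hx) (rot_inj hrpos hen)
    (fun σ => Kc r σ (a-1) ≤ csum r σ ∧ csum r σ < Kc r σ a)]
  apply congrArg Finset.card
  apply Finset.filter_congr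
  intro σ hσ
  rw [Finset.mem_powersetCard] at hσ
  have hc : csum r σ < r := Nat.mod_lt _ hrpos
  have hKc1 := Kc_image_rot hrpos hen hσ.1 (a-1)
  have hKc2 := Kc_image_rot hrpos hen hσ.1 a
  have hcs := csum_image_rot hrpos hen hσ.1
  have hsplit : Kc r σ a = Kc r σ (a-1) + kc r σ a := by
    have h := Kc_split r σ (a-1)
    have haeq : (a-1) + 1 = a := by omega
    rwa [haeq] at h
  have hKa : Kc r σ a ≤ r := by
    have := Kc_le r σ a
    omega
  rw [hKc1, hKc2, hcs, hsplit]
  exact window_iff hc (by omega)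

lemma Q_eq_Q1 {r d a : ℕ} (hr : 1 ≤ r) (ha : 1 ≤ a) (had : a ≤ d) :
    (((Finset.Icc 1 (r*d)).powersetCard r).filter
        (fun σ => csum r σ < kc r σ a)).card =
    (((Finset.Icc 1 (r*d)).powersetCard r).filter (fun σ => csum r σ < kc r σ 1)).card := by
  have hrpos : 0 < r := by omega
  rw [← card_filter_transport (r*d) r (swapFn r a)
    (fun x hx => sw_maps hrpos ha had hx) (sw_inj hrpos ha had)
    (fun σ => csum r σ < kc r σ a)]
  apply congrArg Finset.card
  apply Finset.filter_congr
  intro σ hσ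
  rw [Finset.mem_powersetCard] at hσ
  rw [csum_image_sw hrpos ha had hσ.1, kc_image_sw hrpos ha had hσ.1]

lemma sum_parts {r d : ℕ} (hr : 1 ≤ r) (hd : 1 ≤ d) :
    ∑ a ∈ Finset.Icc 1 d, (((Finset.Icc 1 (r*d)).powersetCard r).filter
      (fun σ => Kc r σ (a-1) ≤ csum r σ ∧ csum r σ < Kc r σ a)).card = (r*d).choose r := by
  have hrpos : 0 < r := by omega
  have hcard : ((Finset.Icc 1 (r*d)).powersetCard r).card = (r*d).choose r := by
    have h : r*d + 1 - 1 = r*d := by omega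
    rw [Finset.card_powersetCard, Nat.card_Icc, h]
  calc ∑ a ∈ Finset.Icc 1 d, (((Finset.Icc 1 (r*d)).powersetCard r).filter
        (fun σ => Kc r σ (a-1) ≤ csum r σ ∧ csum r σ < Kc r σ a)).card
      = ∑ a ∈ Finset.Icc 1 d, ∑ σ ∈ (Finset.Icc 1 (r*d)).powersetCard r,
          (if Kc r σ (a-1) ≤ csum r σ ∧ csum r σ < Kc r σ a then 1 else 0) := by
        apply Finset.sum_congr rfl
        intro a _
        exact Finset.card_filter _ _
    _ = ∑ σ ∈ (Finset.Icc 1 (r*d)).powersetCard r, ∑ a ∈ Finset.Icc 1 d,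
          (if Kc r σ (a-1) ≤ csum r σ ∧ csum r σ < Kc r σ a then 1 else 0) :=
        Finset.sum_comm
    _ = ∑ σ ∈ (Finset.Icc 1 (r*d)).powersetCard r, 1 := by
        apply Finset.sum_congr rfl
        intro σ hσ
        rw [Finset.mem_powersetCard] at hσ
        have hc : csum r σ < r := Nat.mod_lt _ hrpos
        -- the unique block containing the mark
        have hdA : d ∈ (Finset.Icc 1 d).filter (fun b => csum r σ < Kc r σ b) := by
          rw [Finset.mem_filter, Finset.mem_Icc]
          refine ⟨⟨hd, le_refl d⟩, ?_⟩
          rw [Kc_top hσ.1, hσ.2]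
          exact hc
        have hA : ((Finset.Icc 1 d).filter (fun b => csum r σ < Kc r σ b)).Nonempty := ⟨d, hdA⟩
        set a₀ := ((Finset.Icc 1 d).filter (fun b => csum r σ < Kc r σ b)).min' hA with ha₀
        have ha₀mem := Finset.min'_mem _ hA
        rw [Finset.mem_filter, Finset.mem_Icc] at ha₀mem
        have hP₀ : Kc r σ (a₀-1) ≤ csum r σ ∧ csum r σ < Kc r σ a₀ := by
          refine ⟨?_, ha₀mem.2⟩
          rcases Nat.lt_or_ge a₀ 2 with h1 | h2
          · have : a₀ - 1 = 0 := by omega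
            rw [this, Kc_zero r hσ.1]
            exact Nat.zero_le _
          · by_contra hcon
            push_neg at hcon
            have hmem : a₀ - 1 ∈ (Finset.Icc 1 d).filter (fun b => csum r σ < Kc r σ b) := by
              rw [Finset.mem_filter, Finset.mem_Icc]
              exact ⟨⟨by omega, by omega⟩, hcon⟩
            have := Finset.min'_le _ _ hmem
            omega
        have huniq : ∀ b ∈ Finset.Icc 1 d, b ≠ a₀ →
            (if Kc r σ (b-1) ≤ csum r σ ∧ csum r σ < Kc r σ b then 1 else 0) = 0 := by
          intro b hb hne
          rw [Finset.mem_Icc] at hb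
          rw [if_neg]
          intro hcon
          exact hne (block_unique hrpos σ (csum r σ) hcon.1 hcon.2 hP₀.1 hP₀.2 hb.1 ha₀mem.1.1)
        rw [Finset.sum_eq_single a₀ huniq
          (fun hcon => absurd (Finset.mem_Icc.mpr ha₀mem.1) hcon), if_pos hP₀]
    _ = (r*d).choose r := by rw [Finset.sum_const, smul_eq_mul, Nat.mul_one, hcard]

lemma binom_identity {r d : ℕ} (hr : 1 ≤ r) (hd : 1 ≤ d) :
    d * (r * d - 1).choose (r - 1) = (r * d).choose r := by
  have hrd : 1 ≤ r * d := Nat.one_le_iff_ne_zero.mpr (Nat.mul_ne_zero (by omega) (by omega))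
  have h := Nat.add_one_mul_choose_eq (r*d - 1) (r-1)
  have h1 : (r*d - 1) + 1 = r*d := by omega
  have h2 : (r-1) + 1 = r := by omega
  rw [h1, h2] at h
  apply Nat.eq_of_mul_eq_mul_left (show 0 < r by omega)
  calc r * (d * (r * d - 1).choose (r - 1)) = (r * d) * (r * d - 1).choose (r - 1) := by ring
    _ = (r * d).choose r * r := h
    _ = r * (r * d).choose r := by ring

theorem stmt4' (r d : ℕ) (hr : 1 ≤ r) (hd : 1 ≤ d) :
    ∀ a : ℕ, 1 ≤ a → a ≤ d →
      (OmegaEdges r d a).card = (r * d - 1).choose (r - 1) ∧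
      d * (r * d - 1).choose (r - 1) = (r * d).choose r := by
  intro a ha had
  have key : ∀ b, 1 ≤ b → b ≤ d → (OmegaEdges r d b).card =
      (((Finset.Icc 1 (r*d)).powersetCard r).filter (fun σ => csum r σ < kc r σ 1)).card := by
    intro b hb hbd
    rw [omega_eq_filter hr hb hbd, N_eq_Q hr hb hbd, Q_eq_Q1 hr hb hbd]
  have hsum : d * (((Finset.Icc 1 (r*d)).powersetCard r).filter
      (fun σ => csum r σ < kc r σ 1)).card = (r*d).choose r := by
    have hs := sum_parts (r := r) hr hd
    have hterm : ∀ b ∈ Finset.Icc 1 d,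
        (((Finset.Icc 1 (r*d)).powersetCard r).filter
          (fun σ => Kc r σ (b-1) ≤ csum r σ ∧ csum r σ < Kc r σ b)).card =
        (((Finset.Icc 1 (r*d)).powersetCard r).filter (fun σ => csum r σ < kc r σ 1)).card := by
      intro b hb
      rw [Finset.mem_Icc] at hb
      rw [← key b hb.1 hb.2, omega_eq_filter hr hb.1 hb.2]
    rw [Finset.sum_congr rfl hterm, Finset.sum_const, Nat.card_Icc, smul_eq_mul] at hs
    have : d + 1 - 1 = d := by omega
    rwa [this] at hs
  have hbin := binom_identity hr hd
  constructor
  · apply Nat.eq_of_mul_eq_mul_left (show 0 < d by omega)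
    rw [key a ha had, hsum, hbin]
  · exact hbin

end Stmt4Aux


/-- for every `1 ≤ a ≤ d`, the number of hyperedges of `Ω_a^{(r,d)}` equals
`C(rd-1, r-1)`, which equals `(1/d)·C(rd, r)`.  Hence the partition is homogeneous. -/
theorem stmt4 (r d : ℕ) (hr : 1 ≤ r) (hd : 1 ≤ d) :
    ∀ a : ℕ, 1 ≤ a → a ≤ d →
      (OmegaEdges r d a).card = (r * d - 1).choose (r - 1) ∧
      d * (r * d - 1).choose (r - 1) = (r * d).choose r :=
  Stmt4Aux.stmt4' r d hr hd
end

section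
/- Let 1 ≤ k ≤ r and let a be an integer. The number of hyperedges of Γ_{k,r}^a equals the binomial coefficient C(r−1, k−1); that is, the number of k-element subsets {i_1 < … < i_k} of {1,…,r} whose element sum is congruent modulo r to a+t for some 0 ≤ t ≤ k−1 equals C(r−1, k−1). -/
open Finset
open scoped Classical

noncomputable def Nfn (r k : ℕ) (c : ZMod r) : ℕ :=
  (((Finset.Icc 1 r).powersetCard k).filter
    (fun σ : Finset ℕ => (∑ i ∈ σ, (i : ZMod r)) = c)).card

lemma ff_mem {r : ℕ} (hr : 1 ≤ r) {x : ℕ} (hx : x ∈ Finset.Icc 1 r) :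
    x % r + 1 ∈ Finset.Icc 1 r := by
  have := Nat.mod_lt x (show 0 < r from hr)
  simp only [Finset.mem_Icc] at *
  omega

lemma gg_mem {r : ℕ} (hr : 1 ≤ r) {y : ℕ} (hy : y ∈ Finset.Icc 1 r) :
    (if y = 1 then r else y - 1) ∈ Finset.Icc 1 r := by
  simp only [Finset.mem_Icc] at *
  split_ifs <;> omega

lemma gf_eq {r : ℕ} (hr : 1 ≤ r) {x : ℕ} (hx : x ∈ Finset.Icc 1 r) :
    (if x % r + 1 = 1 then r else x % r + 1 - 1) = x := by
  simp only [Finset.mem_Icc] at hx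
  rcases eq_or_lt_of_le hx.2 with h | h
  · subst h; simp [Nat.mod_self]
  · rw [Nat.mod_eq_of_lt h, if_neg (by omega)]; omega

lemma fg_eq {r : ℕ} (hr : 1 ≤ r) {y : ℕ} (hy : y ∈ Finset.Icc 1 r) :
    (if y = 1 then r else y - 1) % r + 1 = y := by
  simp only [Finset.mem_Icc] at hy
  split_ifs with h
  · rw [Nat.mod_self]; omega
  · rw [Nat.mod_eq_of_lt (by omega)]; omega

lemma cast_ff (r x : ℕ) : ((x % r + 1 : ℕ) : ZMod r) = (x : ZMod r) + 1 := by
  push_cast [ZMod.natCast_mod]; ring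

lemma cast_gg {r y : ℕ} (hy : y ∈ Finset.Icc 1 r) :
    (((if y = 1 then r else y - 1) : ℕ) : ZMod r) = (y : ZMod r) - 1 := by
  simp only [Finset.mem_Icc] at hy
  split_ifs with h
  · subst h; simp
  · push_cast [Nat.cast_sub (show 1 ≤ y by omega)]; ring

lemma Nfn_shift {r : ℕ} (hr : 1 ≤ r) (k : ℕ) (c : ZMod r) :
    Nfn r k c = Nfn r k (c + k) := by
  classical
  unfold Nfn
  apply Finset.card_nbij' (fun σ => σ.image (fun x => x % r + 1))
      (fun τ => τ.image (fun y => if y = 1 then r else y - 1))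
  · intro σ hσ
    simp only [Finset.mem_coe, Finset.mem_filter, Finset.mem_powersetCard] at hσ ⊢
    obtain ⟨⟨hsub, hcard⟩, hsum⟩ := hσ
    have hinj : Set.InjOn (fun x => x % r + 1) ↑σ := by
      intro x hx y hy hxy
      have := gf_eq hr (hsub hx); have := gf_eq hr (hsub hy)
      simp only at hxy
      rw [← gf_eq hr (hsub hx), ← gf_eq hr (hsub hy), hxy]
    refine ⟨⟨?_, ?_⟩, ?_⟩
    · intro y hy
      obtain ⟨x, hx, rfl⟩ := Finset.mem_image.mp hy
      exact ff_mem hr (hsub hx)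
    · rw [Finset.card_image_of_injOn hinj, hcard]
    · rw [Finset.sum_image (fun x hx y hy h => hinj hx hy h)]
      simp only [cast_ff]
      rw [Finset.sum_add_distrib, Finset.sum_const, hcard, hsum]
      simp [mul_comm]
  · intro τ hτ
    simp only [Finset.mem_coe, Finset.mem_filter, Finset.mem_powersetCard] at hτ ⊢
    obtain ⟨⟨hsub, hcard⟩, hsum⟩ := hτ
    have hinj : Set.InjOn (fun y => if y = 1 then r else y - 1) ↑τ := by
      intro x hx y hy hxy
      simp only at hxy
      rw [← fg_eq hr (hsub hx), ← fg_eq hr (hsub hy), hxy]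
    refine ⟨⟨?_, ?_⟩, ?_⟩
    · intro y hy
      obtain ⟨x, hx, rfl⟩ := Finset.mem_image.mp hy
      exact gg_mem hr (hsub hx)
    · rw [Finset.card_image_of_injOn hinj, hcard]
    · rw [Finset.sum_image (fun x hx y hy h => hinj hx hy h)]
      have : ∀ y ∈ τ, (((if y = 1 then r else y - 1) : ℕ) : ZMod r) = (y : ZMod r) - 1 :=
        fun y hy => cast_gg (hsub hy)
      rw [Finset.sum_congr rfl this, Finset.sum_sub_distrib, Finset.sum_const, hcard, hsum]
      simp [mul_comm]
  · intro σ hσ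
    simp only [Finset.mem_coe, Finset.mem_filter, Finset.mem_powersetCard] at hσ
    dsimp only
    rw [Finset.image_image]
    have h : Set.EqOn ((fun y => if y = 1 then r else y - 1) ∘ (fun x => x % r + 1)) id ↑σ :=
      fun x hx => gf_eq hr (hσ.1.1 hx)
    rw [Finset.image_congr h, Finset.image_id]
  · intro τ hτ
    simp only [Finset.mem_coe, Finset.mem_filter, Finset.mem_powersetCard] at hτ
    dsimp only
    rw [Finset.image_image]
    have h : Set.EqOn ((fun x => x % r + 1) ∘ (fun y => if y = 1 then r else y - 1)) id ↑τ :=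
      fun y hy => fg_eq hr (hτ.1.1 hy)
    rw [Finset.image_congr h, Finset.image_id]

noncomputable def Wfn (r k : ℕ) (c : ZMod r) : ℕ :=
  ∑ t ∈ Finset.range k, Nfn r k (c + t)

lemma Wfn_succ {r : ℕ} (hr : 1 ≤ r) (k : ℕ) (c : ZMod r) :
    Wfn r k (c + 1) = Wfn r k c := by
  have h1 := Finset.sum_range_succ (fun t : ℕ => Nfn r k (c + t)) k
  have h2 := Finset.sum_range_succ' (fun t : ℕ => Nfn r k (c + t)) k
  have e : ∀ t ∈ Finset.range k, Nfn r k (c + 1 + (t : ZMod r)) = Nfn r k (c + ((t + 1 : ℕ) : ZMod r)) := by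
    intro t _
    congr 1
    push_cast
    ring
  unfold Wfn
  rw [Finset.sum_congr rfl e]
  have h3 : Nfn r k (c + ((k : ℕ) : ZMod r)) = Nfn r k c := (Nfn_shift hr k c).symm
  simp only [h3, Nat.cast_zero, add_zero] at h1 h2
  omega

lemma Wfn_add {r : ℕ} (hr : 1 ≤ r) (k : ℕ) (c : ZMod r) (n : ℕ) :
    Wfn r k (c + n) = Wfn r k c := by
  induction n with
  | zero => simp
  | succ m ih =>
    have : c + ((m + 1 : ℕ) : ZMod r) = (c + m) + 1 := by push_cast; ring
    rw [this, Wfn_succ hr, ih]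

lemma sum_range_Nfn {r : ℕ} [NeZero r] (hr : 1 ≤ r) (k : ℕ) (d : ZMod r) :
    ∑ n ∈ Finset.range r, Nfn r k (d + n) = ∑ c : ZMod r, Nfn r k c := by
  apply Finset.sum_nbij' (i := fun n : ℕ => d + (n : ZMod r)) (j := fun c : ZMod r => (c - d).val)
  · intro n _; exact Finset.mem_univ _
  · intro c _
    simp only [Finset.mem_range]
    exact ZMod.val_lt _
  · intro n hn
    simp only [Finset.mem_range] at hn
    simp only [add_sub_cancel_left]
    exact ZMod.val_cast_of_lt hn
  · intro c _
    simp [ZMod.natCast_val, ZMod.cast_id]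
  · intro n _
    rfl

lemma sum_univ_Nfn {r : ℕ} [NeZero r] (k : ℕ) :
    ∑ c : ZMod r, Nfn r k c = r.choose k := by
  unfold Nfn
  classical
  rw [← Finset.card_eq_sum_card_fiberwise
    (f := fun σ : Finset ℕ => ∑ i ∈ σ, (i : ZMod r)) (fun x _ => Finset.mem_univ _)]
  rw [Finset.card_powersetCard, Nat.card_Icc]
  norm_num

/-- the number of hyperedges of `Γ_{k,r}^a` is `C(r-1, k-1)`. -/
theorem stmt8 (r k : ℕ) (hk : 1 ≤ k) (hkr : k ≤ r) (a : ℤ) :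
    (GammaA r k a).card = (r - 1).choose (k - 1) := by
  have hr : 1 ≤ r := le_trans hk hkr
  haveI : NeZero r := ⟨by omega⟩
  have key : (GammaA r k a).card = Wfn r k ((a : ZMod r)) := by
    have hE : GammaA r k a = (Finset.range k).biUnion
        (fun t => ((Finset.Icc 1 r).powersetCard k).filter
          (fun σ : Finset ℕ => (∑ i ∈ σ, (i : ZMod r)) = (a : ZMod r) + t)) := by
      ext σ
      have cond : ∀ t : ℕ, ((∑ i ∈ σ, (i : ℤ)) % (r : ℤ) = (a + (t : ℤ)) % (r : ℤ)) ↔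
          ((∑ i ∈ σ, (i : ZMod r)) = (a : ZMod r) + (t : ZMod r)) := by
        intro t
        rw [← ZMod.intCast_eq_intCast_iff']
        push_cast
        rfl
      simp only [GammaA, Finset.mem_filter, Finset.mem_biUnion, Finset.mem_range, cond]
      tauto
    rw [hE, Finset.card_biUnion]
    · rfl
    · intro t ht t' ht' hne
      rw [Function.onFun, Finset.disjoint_left]
      intro σ h1 h2
      simp only [Finset.mem_filter] at h1 h2
      apply hne
      have h := add_left_cancel (h1.2.symm.trans h2.2)
      have h' := congrArg ZMod.val h
      simp only [Finset.mem_coe, Finset.mem_range] at ht ht'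
      rwa [ZMod.val_cast_of_lt (lt_of_lt_of_le ht hkr),
        ZMod.val_cast_of_lt (lt_of_lt_of_le ht' hkr)] at h'
  have h1 : ∑ n ∈ Finset.range r, Wfn r k ((a : ZMod r) + n) = r * Wfn r k (a : ZMod r) := by
    rw [Finset.sum_congr rfl (fun n _ => Wfn_add hr k _ n), Finset.sum_const, smul_eq_mul,
      Finset.card_range]
  have h2 : ∑ n ∈ Finset.range r, Wfn r k ((a : ZMod r) + n) = k * r.choose k := by
    unfold Wfn
    rw [Finset.sum_comm]
    rw [Finset.sum_congr rfl (fun t _ => ?_)]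
    · rw [Finset.sum_const, Finset.card_range, smul_eq_mul]
    · calc ∑ n ∈ Finset.range r, Nfn r k ((a : ZMod r) + n + t)
          = ∑ n ∈ Finset.range r, Nfn r k (((a : ZMod r) + t) + n) := by
            apply Finset.sum_congr rfl; intro n _; congr 1; ring
        _ = r.choose k := by rw [sum_range_Nfn hr, sum_univ_Nfn]
  have hid : k * r.choose k = r * ((r - 1).choose (k - 1)) := by
    obtain ⟨k', rfl⟩ : ∃ k', k = k' + 1 := ⟨k - 1, by omega⟩
    obtain ⟨r', rfl⟩ : ∃ r', r = r' + 1 := ⟨r - 1, by omega⟩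
    simp only [Nat.add_sub_cancel]
    have h := Nat.add_one_mul_choose_eq r' k'
    rw [mul_comm]
    exact h.symm
  rw [key]
  apply Nat.eq_of_mul_eq_mul_left (show 0 < r by omega)
  rw [← h1, h2, hid]
end

section
/- Let 1 ≤ k ≤ r and let a be an integer. Every (k−1)-element subset of {1,…,r} is contained in some hyperedge of Γ_{k,r}^a; that is, the set of (k−1)-faces of Γ_{k,r}^a is the set of all (k−1)-element subsets of {1,…,r}. -/
open Finset
open scoped Classical

/-- every `(k-1)`-element subset of `{1,...,r}` is contained in some
hyperedge of `Γ_{k,r}^a`; i.e. the set of `(k-1)`-faces of `Γ_{k,r}^a` is the set of all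
`(k-1)`-element subsets of `{1,...,r}`. -/
theorem stmt9 (r k : ℕ) (hk : 1 ≤ k) (hkr : k ≤ r) (a : ℤ) :
    (∀ τ : Finset ℕ, τ ⊆ Finset.Icc 1 r → τ.card = k - 1 →
      ∃ σ ∈ GammaA r k a, τ ⊆ σ) ∧
    ((Finset.Icc 1 r).powersetCard (k - 1)).filter
        (fun τ => ∃ σ ∈ GammaA r k a, τ ⊆ σ)
      = (Finset.Icc 1 r).powersetCard (k - 1) := by
  have main : ∀ τ : Finset ℕ, τ ⊆ Finset.Icc 1 r → τ.card = k - 1 →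
      ∃ σ ∈ GammaA r k a, τ ⊆ σ := by
    intro τ hτsub hτcard
    haveI : NeZero r := ⟨by omega⟩
    set S : ℤ := ∑ i ∈ τ, (i : ℤ) with hS
    set C : Finset ℕ := Finset.Icc 1 r \ τ with hC
    have hCcard : C.card = r - k + 1 := by
      rw [hC, Finset.card_sdiff_of_subset hτsub, Nat.card_Icc, hτcard]; omega
    set f : ℕ → ZMod r := fun x => ((S + x : ℤ) : ZMod r) with hf
    set g : ℕ → ZMod r := fun t => ((a + t : ℤ) : ZMod r) with hg
    have hfinj : Set.InjOn f C := by
      intro x hx y hy hxy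
      simp only [hf] at hxy
      have hx1 := Finset.mem_Icc.mp (Finset.mem_sdiff.mp hx).1
      have hy1 := Finset.mem_Icc.mp (Finset.mem_sdiff.mp hy).1
      have h1 : ((S + x : ℤ)) % r = (S + y : ℤ) % r :=
        (ZMod.intCast_eq_intCast_iff' _ _ _).mp hxy
      have h2 : (r : ℤ) ∣ (S + y) - (S + x) := Int.ModEq.dvd h1
      have h2' : (r : ℤ) ∣ ((y : ℤ) - x) := by
        have : (S + y) - (S + x) = (y : ℤ) - x := by ring
        rwa [this] at h2
      have h3 : ((y : ℤ) - x) = 0 := by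
        refine Int.eq_zero_of_abs_lt_dvd h2' ?_
        rw [abs_lt]
        constructor <;> push_cast <;> omega
      have : (y : ℤ) = x := by linarith
      exact_mod_cast this.symm
    have hginj : Set.InjOn g (Finset.range k) := by
      intro t ht s hs hts
      simp only [hg] at hts
      have ht1 := Finset.mem_range.mp ht
      have hs1 := Finset.mem_range.mp hs
      have h1 : ((a + t : ℤ)) % r = (a + s : ℤ) % r :=
        (ZMod.intCast_eq_intCast_iff' _ _ _).mp hts
      have h2 : (r : ℤ) ∣ (a + s) - (a + t) := Int.ModEq.dvd h1
      have h2' : (r : ℤ) ∣ ((s : ℤ) - t) := by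
        have : (a + s) - (a + t) = (s : ℤ) - t := by ring
        rwa [this] at h2
      have h3 : ((s : ℤ) - t) = 0 := by
        refine Int.eq_zero_of_abs_lt_dvd h2' ?_
        rw [abs_lt]
        constructor <;> push_cast <;> omega
      have : (s : ℤ) = t := by linarith
      exact_mod_cast this.symm
    have hA : (C.image f).card = r - k + 1 := by
      rw [Finset.card_image_of_injOn hfinj, hCcard]
    have hB : ((Finset.range k).image g).card = k := by
      rw [Finset.card_image_of_injOn hginj, Finset.card_range]
    have hnd : ¬ Disjoint (C.image f) ((Finset.range k).image g) := by
      intro hdisj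
      have h1 := Finset.card_union_of_disjoint hdisj
      have h2 := Finset.card_le_univ ((C.image f) ∪ ((Finset.range k).image g))
      rw [h1, hA, hB] at h2
      have hcard : Fintype.card (ZMod r) = r := ZMod.card r
      omega
    obtain ⟨z, hz1, hz2⟩ := Finset.not_disjoint_iff.mp hnd
    obtain ⟨x, hxC, hfx⟩ := Finset.mem_image.mp hz1
    obtain ⟨t, ht, hgt⟩ := Finset.mem_image.mp hz2
    have hxIcc := (Finset.mem_sdiff.mp hxC).1
    have hxτ : x ∉ τ := (Finset.mem_sdiff.mp hxC).2
    refine ⟨insert x τ, ?_, Finset.subset_insert x τ⟩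
    rw [GammaA, Finset.mem_filter, Finset.mem_powersetCard]
    refine ⟨⟨Finset.insert_subset hxIcc hτsub, ?_⟩, t, ht, ?_⟩
    · rw [Finset.card_insert_of_notMem hxτ, hτcard]; omega
    · have heq : f x = g t := hfx.trans hgt.symm
      simp only [hf, hg] at heq
      have h1 : ((S + x : ℤ)) % r = (a + t : ℤ) % r :=
        (ZMod.intCast_eq_intCast_iff' _ _ _).mp heq
      rw [Finset.sum_insert hxτ]
      rw [← hS]
      convert h1 using 2
      ring
  refine ⟨main, ?_⟩
  apply Finset.filter_true_of_mem
  intro τ hτ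
  obtain ⟨hsub, hcard⟩ := Finset.mem_powersetCard.mp hτ
  exact main τ hsub hcard
end

section
/- Let 1 ≤ k ≤ r, let a be an integer, and let G be a nonempty family of hyperedges of Γ_{k,r}^a. Then there exist σ ∈ G and s ∈ σ such that for every τ ∈ G with τ ≠ σ, the (k−1)-element set σ ∖ {s} is not a subset of τ. In other words, every nonempty sub-hypergraph G of Γ_{k,r}^a has a hyperedge σ such that G is leaf-equivalent to G ∖ {σ}. -/
open Finset
open scoped Classical

/-! ### Auxiliary machinery for Statement 10 -/

lemma stmt10_two_pow_icc_sum {s r : ℕ} (h : s ≤ r) :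
    (∑ y ∈ Finset.Icc (s + 1) r, 2 ^ (r - y)) + 1 = 2 ^ (r - s) := by
  obtain ⟨n, rfl⟩ : ∃ n, r = s + n := ⟨r - s, by omega⟩
  clear h
  induction n with
  | zero => simp
  | succ n ih =>
    rw [show s + (n + 1) = (s + n) + 1 from rfl,
      Finset.sum_Icc_succ_top (by omega)]
    have he : ∀ y ∈ Finset.Icc (s + 1) (s + n),
        2 ^ (s + n + 1 - y) = 2 * 2 ^ (s + n - y) := by
      intro y hy
      rw [Finset.mem_Icc] at hy
      rw [show s + n + 1 - y = (s + n - y) + 1 by omega, pow_succ]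
      ring
    rw [Finset.sum_congr rfl he, ← Finset.mul_sum]
    have h0 : s + n + 1 - (s + n + 1) = 0 := by omega
    have h2 : s + n + 1 - s = (s + n - s) + 1 := by omega
    rw [h0, pow_zero, h2, pow_succ]
    linarith

lemma stmt10_filter_card_split {σ : Finset ℕ} {s : ℕ} (hs : s ∈ σ) :
    σ.card = (σ.filter (· < s)).card + 1 + (σ.filter (fun y => s < y)).card := by
  have h1 := Finset.card_filter_add_card_filter_not (s := σ) (p := (· < s))
  have h2 : σ.filter (fun y => ¬ y < s) = insert s (σ.filter (fun y => s < y)) := by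
    ext y
    simp only [Finset.mem_filter, Finset.mem_insert, not_lt]
    constructor
    · rintro ⟨hyσ, hys⟩
      rcases eq_or_lt_of_le hys with h | h
      · exact Or.inl h.symm
      · exact Or.inr ⟨hyσ, h⟩
    · rintro (rfl | ⟨hyσ, h⟩)
      · exact ⟨hs, le_refl _⟩
      · exact ⟨hyσ, le_of_lt h⟩
  rw [h2, Finset.card_insert_of_notMem (by simp)] at h1
  omega

lemma stmt10_exists_nth (σ : Finset ℕ) :
    ∀ t, t < σ.card → ∃ s ∈ σ, (σ.filter (· < s)).card = t := by
  intro t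
  induction t with
  | zero =>
    intro ht
    have hne : σ.Nonempty := Finset.card_pos.mp (by omega)
    refine ⟨σ.min' hne, σ.min'_mem hne, ?_⟩
    rw [Finset.card_eq_zero, Finset.filter_eq_empty_iff]
    intro y hy
    exact not_lt.mpr (σ.min'_le y hy)
  | succ t ih =>
    intro ht
    obtain ⟨s, hsσ, hc⟩ := ih (by omega)
    have hsplit := stmt10_filter_card_split hsσ
    have hA : (σ.filter (fun y => s < y)).Nonempty := by
      rw [← Finset.card_pos]; omega
    set s₂ := (σ.filter (fun y => s < y)).min' hA with hs₂
    have hs₂mem := (σ.filter (fun y => s < y)).min'_mem hA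
    rw [Finset.mem_filter] at hs₂mem
    refine ⟨s₂, hs₂mem.1, ?_⟩
    have heq : σ.filter (· < s₂) = insert s (σ.filter (· < s)) := by
      ext y
      simp only [Finset.mem_filter, Finset.mem_insert]
      constructor
      · rintro ⟨hyσ, hy⟩
        rcases lt_trichotomy y s with h | rfl | h
        · exact Or.inr ⟨hyσ, h⟩
        · exact Or.inl rfl
        · exact absurd hy (not_lt.mpr (Finset.min'_le _ y (Finset.mem_filter.mpr ⟨hyσ, h⟩)))
      · rintro (rfl | ⟨hyσ, h⟩)
        · exact ⟨hsσ, hs₂mem.2⟩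
        · exact ⟨hyσ, lt_trans h hs₂mem.2⟩
    rw [heq, Finset.card_insert_of_notMem (by simp), hc]

/-- The window index `t` of an edge of `Γ_{k,r}^a`. -/
noncomputable def stmt10T (r k : ℕ) (a : ℤ) (σ : Finset ℕ) : ℕ :=
  if h : ∃ t, t < k ∧ (∑ i ∈ σ, (i : ℤ)) % (r : ℤ) = (a + (t : ℤ)) % (r : ℤ) then
    h.choose else 0

/-- The pointer element of an edge: the `(t+1)`-th smallest element. -/
noncomputable def stmt10S (r k : ℕ) (a : ℤ) (σ : Finset ℕ) : ℕ :=
  if h : ∃ s, s ∈ σ ∧ (σ.filter (· < s)).card = stmt10T r k a σ then h.choose else 0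

/-- The weight of an edge. -/
noncomputable def stmt10W (r k : ℕ) (a : ℤ) (σ : Finset ℕ) : ℕ :=
  ∑ y ∈ σ.filter (· ≤ stmt10S r k a σ), 2 ^ (r - y)

lemma stmt10_gamma_spec {r k : ℕ} {a : ℤ} {σ : Finset ℕ} (h : σ ∈ GammaA r k a) :
    σ ⊆ Finset.Icc 1 r ∧ σ.card = k := by
  rw [GammaA, Finset.mem_filter, Finset.mem_powersetCard] at h
  exact h.1

lemma stmt10T_spec {r k : ℕ} {a : ℤ} {σ : Finset ℕ} (hσ : σ ∈ GammaA r k a) :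
    stmt10T r k a σ < k ∧
      (∑ i ∈ σ, (i : ℤ)) % (r : ℤ) = (a + (stmt10T r k a σ : ℤ)) % (r : ℤ) := by
  rw [GammaA, Finset.mem_filter] at hσ
  obtain ⟨-, t, ht, hc⟩ := hσ
  have h : ∃ t, t < k ∧ (∑ i ∈ σ, (i : ℤ)) % (r : ℤ) = (a + (t : ℤ)) % (r : ℤ) :=
    ⟨t, Finset.mem_range.mp ht, hc⟩
  rw [stmt10T, dif_pos h]
  exact h.choose_spec

lemma stmt10S_spec {r k : ℕ} {a : ℤ} {σ : Finset ℕ} (hσ : σ ∈ GammaA r k a) :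
    stmt10S r k a σ ∈ σ ∧
      (σ.filter (· < stmt10S r k a σ)).card = stmt10T r k a σ := by
  have hcard : σ.card = k := (stmt10_gamma_spec hσ).2
  have h : ∃ s, s ∈ σ ∧ (σ.filter (· < s)).card = stmt10T r k a σ := by
    obtain ⟨s, hs1, hs2⟩ := stmt10_exists_nth σ (stmt10T r k a σ)
      (by rw [hcard]; exact (stmt10T_spec hσ).1)
    exact ⟨s, hs1, hs2⟩
  rw [stmt10S, dif_pos h]
  exact h.choose_spec

/-- Key lemma: if `τ ∈ Γ` contains `σ \ {ptr σ}` and `τ ≠ σ`, then `W τ < W σ`. -/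
lemma stmt10_key {r k : ℕ} {a : ℤ} (hk : 1 ≤ k) (hkr : k ≤ r)
    {σ τ : Finset ℕ} (hσ : σ ∈ GammaA r k a) (hτ : τ ∈ GammaA r k a)
    (hτne : τ ≠ σ) (hsub : σ \ {stmt10S r k a σ} ⊆ τ) :
    stmt10W r k a τ < stmt10W r k a σ := by
  obtain ⟨hσI, hσcard⟩ := stmt10_gamma_spec hσ
  obtain ⟨hτI, hτcard⟩ := stmt10_gamma_spec hτ
  obtain ⟨hsmem, hscount⟩ := stmt10S_spec hσ
  obtain ⟨hs'mem, hs'count⟩ := stmt10S_spec hτ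
  obtain ⟨htk, hσmod⟩ := stmt10T_spec hσ
  obtain ⟨ht'k, hτmod⟩ := stmt10T_spec hτ
  set s := stmt10S r k a σ with hs_def
  set s' := stmt10S r k a τ with hs'_def
  set t := stmt10T r k a σ with ht_def
  set t' := stmt10T r k a τ with ht'_def
  have hs1r : 1 ≤ s ∧ s ≤ r := Finset.mem_Icc.mp (hσI hsmem)
  -- extract x
  have hsscard : (σ \ {s}).card = k - 1 := by
    rw [Finset.sdiff_singleton_eq_erase, Finset.card_erase_of_mem hsmem, hσcard]
  have hxcard : (τ \ (σ \ {s})).card = 1 := by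
    rw [Finset.card_sdiff_of_subset hsub, hτcard, hsscard]; omega
  obtain ⟨x, hxeq⟩ := Finset.card_eq_one.mp hxcard
  have hτeq : τ = (σ \ {s}) ∪ {x} := by
    rw [← hxeq, Finset.union_sdiff_of_subset hsub]
  have hxτ : x ∈ τ := by
    have : x ∈ τ \ (σ \ {s}) := by rw [hxeq]; exact Finset.mem_singleton_self x
    exact (Finset.mem_sdiff.mp this).1
  have hxns : x ≠ s := by
    rintro rfl
    apply hτne
    rw [hτeq, Finset.sdiff_singleton_eq_erase, Finset.union_comm,
      ← Finset.insert_eq, Finset.insert_erase hsmem]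
  have hxnσ : x ∉ σ := by
    intro hxσ
    have : x ∈ τ \ (σ \ {s}) := by rw [hxeq]; exact Finset.mem_singleton_self x
    rw [Finset.mem_sdiff] at this
    exact this.2 (Finset.mem_sdiff.mpr ⟨hxσ, by simpa using hxns⟩)
  have hmemτ : ∀ y, y ∈ τ ↔ (y ∈ σ ∧ y ≠ s) ∨ y = x := by
    intro y
    rw [hτeq]
    simp [Finset.mem_union, Finset.mem_sdiff, Finset.mem_singleton, or_comm]
  have hsnτ : s ∉ τ := by
    rw [hmemτ]
    rintro (⟨-, h⟩ | h)
    · exact h rfl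
    · exact hxns h.symm
  have hx1r : 1 ≤ x ∧ x ≤ r := Finset.mem_Icc.mp (hτI hxτ)
  -- sum relation
  have hsum : (∑ i ∈ τ, (i : ℤ)) = (∑ i ∈ σ, (i : ℤ)) - s + x := by
    have hdisjx : Disjoint (σ \ {s}) ({x} : Finset ℕ) :=
      Finset.disjoint_singleton_right.mpr (fun h => hxnσ (Finset.mem_sdiff.mp h).1)
    rw [hτeq, Finset.sum_union hdisjx, Finset.sum_singleton,
      Finset.sum_sdiff_eq_sub (Finset.singleton_subset_iff.mpr hsmem),
      Finset.sum_singleton]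
  -- congruence
  have hdvd : (r : ℤ) ∣ ((t' : ℤ) - t - ((x : ℤ) - s)) := by
    have h1 : (∑ i ∈ σ, (i : ℤ)) ≡ a + t [ZMOD (r : ℤ)] := hσmod
    have h2 : (∑ i ∈ τ, (i : ℤ)) ≡ a + t' [ZMOD (r : ℤ)] := hτmod
    have h3 := (h2.sub h1).dvd
    have heq : (a + t' - (a + t)) - ((∑ i ∈ τ, (i : ℤ)) - (∑ i ∈ σ, (i : ℤ)))
        = (t' : ℤ) - t - ((x : ℤ) - s) := by
      rw [hsum]; ring
    rw [← heq]
    exact h3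
  -- bound (A5): k + s ≤ r + t + 1
  have hA5 : k + s ≤ r + t + 1 := by
    have hsplit := stmt10_filter_card_split hsmem
    have habove : (σ.filter (fun y => s < y)).card ≤ r - s := by
      have hsubI : σ.filter (fun y => s < y) ⊆ Finset.Icc (s + 1) r := by
        intro y hy
        rw [Finset.mem_filter] at hy
        have := Finset.mem_Icc.mp (hσI hy.1)
        rw [Finset.mem_Icc]
        omega
      calc (σ.filter (fun y => s < y)).card ≤ (Finset.Icc (s + 1) r).card :=
            Finset.card_le_card hsubI
        _ = r - s := by rw [Nat.card_Icc]; omega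
    rw [hσcard, hscount] at hsplit
    omega
  -- weight of σ
  have hfσ : σ.filter (· ≤ s) = insert s (σ.filter (· < s)) := by
    ext y
    simp only [Finset.mem_filter, Finset.mem_insert]
    constructor
    · rintro ⟨hyσ, hy⟩
      rcases eq_or_lt_of_le hy with h | h
      · exact Or.inl h
      · exact Or.inr ⟨hyσ, h⟩
    · rintro (rfl | ⟨hyσ, h⟩)
      · exact ⟨hsmem, le_refl _⟩
      · exact ⟨hyσ, le_of_lt h⟩
  have hWσ : stmt10W r k a σ
      = 2 ^ (r - s) + ∑ y ∈ σ.filter (· < s), 2 ^ (r - y) := by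
    rw [stmt10W, ← hs_def, hfσ, Finset.sum_insert (by simp)]
  rcases lt_or_gt_of_ne hxns with hxs | hxs
  · -- case x < s : show s' < x, then easy bound
    have hs'x : s' < x := by
      by_contra hcon
      push_neg at hcon  -- x ≤ s'
      -- c ≤ t'
      have hfeq : τ.filter (· < x) = σ.filter (· < x) := by
        ext y
        simp only [Finset.mem_filter, hmemτ]
        constructor
        · rintro ⟨(⟨hyσ, -⟩ | rfl), hy⟩
          · exact ⟨hyσ, hy⟩
          · omega
        · rintro ⟨hyσ, hy⟩
          exact ⟨Or.inl ⟨hyσ, by omega⟩, hy⟩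
      have hct' : (σ.filter (· < x)).card ≤ t' := by
        rw [← hfeq, ← hs'count]
        apply Finset.card_le_card
        intro y hy
        rw [Finset.mem_filter] at hy ⊢
        exact ⟨hy.1, by omega⟩
      -- t = c + m with m ≤ s - x - 1
      have h1 : (σ.filter (· < s)).filter (· < x) = σ.filter (· < x) := by
        ext y
        simp only [Finset.mem_filter]
        constructor
        · rintro ⟨⟨h1, h2⟩, h3⟩; exact ⟨h1, h3⟩
        · rintro ⟨h1, h2⟩; exact ⟨⟨h1, by omega⟩, h2⟩
      have h2 : ((σ.filter (· < s)).filter (fun y => ¬ y < x)).card + x + 1 ≤ s := by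
        have hsubm : (σ.filter (· < s)).filter (fun y => ¬ y < x)
            ⊆ Finset.Icc (x + 1) (s - 1) := by
          intro y hy
          simp only [Finset.mem_filter, not_lt] at hy
          obtain ⟨⟨hyσ, hys⟩, hxy⟩ := hy
          have hyx : y ≠ x := by rintro rfl; exact hxnσ hyσ
          rw [Finset.mem_Icc]
          omega
        have := Finset.card_le_card hsubm
        rw [Nat.card_Icc] at this
        omega
      have h3 := Finset.card_filter_add_card_filter_not
        (s := σ.filter (· < s)) (p := (· < x))
      rw [h1, hscount] at h3
      -- so t + x + 1 ≤ c + s ≤ t' + s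
      have h4 : t + x + 1 ≤ t' + s := by omega
      -- congruence gives contradiction
      have hpos : 0 < (t' : ℤ) - t - ((x : ℤ) - s) := by
        push_cast
        omega
      have hler := Int.le_of_dvd hpos hdvd
      -- now: r ≤ t' + s - t - x, k + s ≤ r + t + 1, t' < k, 1 ≤ x
      have hc1 : (r : ℤ) ≤ (t' : ℤ) + s - t - x := by linarith
      have hc2 : (k : ℤ) + s ≤ r + t + 1 := by exact_mod_cast hA5
      have hc3 : (t' : ℤ) < k := by exact_mod_cast ht'k
      have hc4 : (1 : ℤ) ≤ x := by exact_mod_cast hx1r.1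
      linarith
    -- s' < x < s
    have hsubτ : τ.filter (· ≤ s') ⊆ σ.filter (· < s) := by
      intro y hy
      rw [Finset.mem_filter] at hy ⊢
      obtain ⟨hyτ, hys'⟩ := hy
      rw [hmemτ] at hyτ
      rcases hyτ with ⟨hyσ, -⟩ | rfl
      · refine ⟨hyσ, ?_⟩
        omega
      · omega
    have hle : ∑ y ∈ τ.filter (· ≤ s'), 2 ^ (r - y)
        ≤ ∑ y ∈ σ.filter (· < s), 2 ^ (r - y) :=
      Finset.sum_le_sum_of_subset hsubτ
    rw [stmt10W, ← hs'_def, hWσ]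
    have hp : 0 < 2 ^ (r - s) := Nat.pow_pos (by omega)
    omega
  · -- case s < x
    have hsub1 : τ.filter (· < s) ⊆ σ.filter (· < s) := by
      intro y hy
      rw [Finset.mem_filter] at hy ⊢
      obtain ⟨hyτ, hys⟩ := hy
      rw [hmemτ] at hyτ
      rcases hyτ with ⟨hyσ, -⟩ | rfl
      · exact ⟨hyσ, hys⟩
      · omega
    have hsub2 : τ.filter (fun y => s < y) ⊆ Finset.Icc (s + 1) r := by
      intro y hy
      rw [Finset.mem_filter] at hy
      have := Finset.mem_Icc.mp (hτI hy.1)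
      rw [Finset.mem_Icc]
      omega
    have hsplitτ : τ.filter (· ≤ s') ⊆ (τ.filter (· < s)) ∪ (τ.filter (fun y => s < y)) := by
      intro y hy
      rw [Finset.mem_filter] at hy
      rw [Finset.mem_union, Finset.mem_filter, Finset.mem_filter]
      have hys : y ≠ s := by rintro rfl; exact hsnτ hy.1
      rcases lt_or_gt_of_ne hys with h | h
      · exact Or.inl ⟨hy.1, h⟩
      · exact Or.inr ⟨hy.1, h⟩
    have hdisj : Disjoint (τ.filter (· < s)) (τ.filter (fun y => s < y)) := by
      rw [Finset.disjoint_left]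
      intro y h1 h2
      rw [Finset.mem_filter] at h1 h2
      omega
    have hb1 : ∑ y ∈ τ.filter (· ≤ s'), 2 ^ (r - y)
        ≤ ∑ y ∈ (τ.filter (· < s)) ∪ (τ.filter (fun y => s < y)), 2 ^ (r - y) :=
      Finset.sum_le_sum_of_subset hsplitτ
    rw [Finset.sum_union hdisj] at hb1
    have hb2 : ∑ y ∈ τ.filter (· < s), 2 ^ (r - y)
        ≤ ∑ y ∈ σ.filter (· < s), 2 ^ (r - y) :=
      Finset.sum_le_sum_of_subset hsub1
    have hb3 : ∑ y ∈ τ.filter (fun y => s < y), 2 ^ (r - y)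
        ≤ ∑ y ∈ Finset.Icc (s + 1) r, 2 ^ (r - y) :=
      Finset.sum_le_sum_of_subset hsub2
    have hb4 := stmt10_two_pow_icc_sum hs1r.2
    rw [stmt10W, ← hs'_def, hWσ]
    omega

/-- every nonempty family `G` of hyperedges of `Γ_{k,r}^a` contains a
hyperedge `σ` with an element `s ∈ σ` such that the `(k-1)`-set `σ \ {s}` is not contained
in any other member of `G`; i.e. `G` is leaf-equivalent to `G \ {σ}`. -/
theorem stmt10 (r k : ℕ) (hk : 1 ≤ k) (hkr : k ≤ r) (a : ℤ)
    (G : Finset (Finset ℕ)) (hG : G ⊆ GammaA r k a) (hGne : G.Nonempty) :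
    ∃ σ ∈ G, ∃ s ∈ σ, ∀ τ ∈ G, τ ≠ σ → ¬ (σ \ {s} ⊆ τ) := by
  obtain ⟨σ, hσG, hmin⟩ := Finset.exists_min_image G (stmt10W r k a) hGne
  have hσΓ := hG hσG
  obtain ⟨hsmem, -⟩ := stmt10S_spec hσΓ
  refine ⟨σ, hσG, stmt10S r k a σ, hsmem, ?_⟩
  intro τ hτG hτne hsub
  have hlt := stmt10_key hk hkr hσΓ (hG hτG) hτne hsub
  exact absurd (hmin τ hτG) (not_le.mpr hlt)
end

section
/- Let 1 ≤ k ≤ r and let a be an integer. Then Γ_{k,r}^a is leaf-equivalent to the empty k-uniform hypergraph: there is an enumeration σ_1,…,σ_n of the hyperedges of Γ_{k,r}^a such that for every 1 ≤ i ≤ n there exists s ∈ σ_i with σ_i ∖ {s} not a subset of σ_j for all j < i. -/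
open Finset
open scoped Classical

noncomputable def tOf (r : ℕ) (a : ℤ) (σ : Finset ℕ) : ℕ :=
  ((∑ i ∈ σ, (i:ℤ) - a) % (r:ℤ)).toNat

noncomputable def rkk (σ : Finset ℕ) (y : ℕ) : ℕ := (σ.filter (fun z => z < y)).card

noncomputable def dig (r : ℕ) (a : ℤ) (σ : Finset ℕ) (y : ℕ) : ℕ :=
  2*(r - y) + (if rkk σ y = tOf r a σ then 1 else 0)

noncomputable def kap (r : ℕ) (a : ℤ) (σ : Finset ℕ) : ℕ :=
  ∑ y ∈ σ, dig r a σ y * (2*r+2)^(rkk σ y)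

lemma rkk_lt_rkk {σ : Finset ℕ} {y z : ℕ} (hy : y ∈ σ) (hyz : y < z) :
    rkk σ y < rkk σ z := by
  apply Finset.card_lt_card
  constructor
  · intro w hw
    simp only [mem_filter] at hw ⊢
    exact ⟨hw.1, lt_trans hw.2 hyz⟩
  · intro hss
    have := hss (by simp [mem_filter, hy, hyz] : y ∈ σ.filter (fun z' => z' < z))
    simp [mem_filter] at this
lemma rkk_lt_card {σ : Finset ℕ} {y : ℕ} (hy : y ∈ σ) : rkk σ y < σ.card := by
  apply Finset.card_lt_card
  constructor
  · exact filter_subset _ _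
  · intro hss
    have := hss hy
    simp [mem_filter] at this

lemma rkk_inj {σ : Finset ℕ} {y z : ℕ} (hy : y ∈ σ) (hz : z ∈ σ)
    (h : rkk σ y = rkk σ z) : y = z := by
  rcases lt_trichotomy y z with h1 | h1 | h1
  · exact absurd h (Nat.ne_of_lt (rkk_lt_rkk hy h1))
  · exact h1
  · exact absurd h.symm (Nat.ne_of_lt (rkk_lt_rkk hz h1))

lemma exists_rkk {σ : Finset ℕ} {i : ℕ} (h : i < σ.card) : ∃ y ∈ σ, rkk σ y = i := by
  have hsurj := Finset.surj_on_of_inj_on_of_card_le (s := σ) (t := Finset.range σ.card)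
    (fun y _ => rkk σ y) (fun y hy => by simpa using rkk_lt_card hy)
    (fun y z hy hz hh => rkk_inj hy hz hh) (by simp)
  obtain ⟨y, hy, hyy⟩ := hsurj i (by simpa using h)
  exact ⟨y, hy, hyy.symm⟩

lemma mem_unpack {r k : ℕ} {a : ℤ} {σ : Finset ℕ} (hr : 1 ≤ r) (hkr : k ≤ r)
    (hσ : σ ∈ GammaA r k a) :
    σ ⊆ Finset.Icc 1 r ∧ σ.card = k ∧ tOf r a σ < k ∧
      (∑ i ∈ σ, (i:ℤ)) % (r:ℤ) = (a + (tOf r a σ : ℤ)) % (r:ℤ) := by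
  rw [GammaA, mem_filter, Finset.mem_powersetCard] at hσ
  obtain ⟨⟨hsub, hcard⟩, t, ht, hmod⟩ := hσ
  simp only [Finset.mem_range] at ht
  have hrpos : (0:ℤ) < (r:ℤ) := by exact_mod_cast hr
  have h1 : (∑ i ∈ σ, (i:ℤ) - a) % (r:ℤ) = (t:ℤ) % (r:ℤ) := by
    have : (∑ i ∈ σ, (i:ℤ)) ≡ a + t [ZMOD (r:ℤ)] := hmod
    have h2 : (∑ i ∈ σ, (i:ℤ)) - a ≡ (a + t) - a [ZMOD (r:ℤ)] := this.sub_right a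
    exact (by simpa using h2 : _ ≡ (t:ℤ) [ZMOD (r:ℤ)])
  have h3 : ((t:ℤ)) % (r:ℤ) = (t:ℤ) := by
    apply Int.emod_eq_of_lt (by positivity)
    exact_mod_cast lt_of_lt_of_le ht hkr
  have htOf : tOf r a σ = t := by
    rw [tOf, h1, h3]; simp
  refine ⟨hsub, hcard, by rw [htOf]; exact ht, by rw [htOf]; exact hmod⟩

-- swap rank equality
lemma rkk_swap {σ : Finset ℕ} {s x y : ℕ} (hs : s ∈ σ) (hx : x ∉ σ)
    (hsy : s < y) (hxy : x < y) :
    rkk (insert x (σ.erase s)) y = rkk σ y := by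
  have hfe : (insert x (σ.erase s)).filter (fun z => z < y)
      = insert x ((σ.filter (fun z => z < y)).erase s) := by
    ext z
    simp only [mem_filter, mem_insert, mem_erase]
    constructor
    · rintro ⟨h1 | ⟨h2, h3⟩, h4⟩
      · exact Or.inl h1
      · exact Or.inr ⟨h2, h3, h4⟩
    · rintro (h1 | ⟨h2, h3, h4⟩)
      · exact ⟨Or.inl h1, h1 ▸ hxy⟩
      · exact ⟨Or.inr ⟨h2, h3⟩, h4⟩
  rw [rkk, hfe, Finset.card_insert_of_notMem (by
      intro hc
      exact hx (Finset.filter_subset _ _ (Finset.erase_subset _ _ hc))),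
    Finset.card_erase_of_mem (by simp [Finset.mem_filter, hs, hsy])]
  have : (σ.filter (fun z => z < y)).card ≠ 0 := by
    intro h0
    have := Finset.card_eq_zero.mp h0
    have : s ∈ (∅ : Finset ℕ) := this ▸ (by simp [Finset.mem_filter, hs, hsy])
    simp at this
  rw [rkk]
  omega

-- high parts equal
lemma filter_gt_swap {σ : Finset ℕ} {s x b : ℕ} (hs : s ≤ b) (hx : x ≤ b) :
    (insert x (σ.erase s)).filter (fun z => b < z) = σ.filter (fun z => b < z) := by
  ext z
  simp only [mem_filter, mem_insert, mem_erase]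
  constructor
  · rintro ⟨h1 | ⟨h2, h3⟩, h4⟩
    · omega
    · exact ⟨h3, h4⟩
  · rintro ⟨h1, h2⟩
    exact ⟨Or.inr ⟨by omega, h1⟩, h2⟩

-- geometric
lemma geo (B m : ℕ) (hB : 1 ≤ B) : (B - 1) * (∑ i ∈ Finset.range m, B^i) = B^m - 1 := by
  induction m with
  | zero => simp
  | succ n ih =>
    rw [Finset.sum_range_succ, Nat.mul_add, ih]
    have h1 : 1 ≤ B^n := Nat.one_le_pow _ _ hB
    have h2 : (B-1) * B^n = B^(n+1) - B^n := by
      have : B^(n+1) = B * B^n := by ring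
      rw [this, Nat.sub_mul, Nat.one_mul]
    rw [h2]
    have h3 : B^n ≤ B^(n+1) := Nat.pow_le_pow_right (by omega) (by omega)
    omega

-- low-sum bound
lemma lowsum {S : Finset ℕ} {ρ d : ℕ → ℕ} {B m : ℕ} (hB : 2 ≤ B)
    (hρm : ∀ y ∈ S, ρ y < m) (hinj : ∀ y ∈ S, ∀ z ∈ S, ρ y = ρ z → y = z)
    (hd : ∀ y ∈ S, d y ≤ B - 1) :
    ∑ y ∈ S, d y * B^(ρ y) ≤ B^m - 1 := by
  calc ∑ y ∈ S, d y * B^(ρ y) ≤ ∑ y ∈ S, (B-1) * B^(ρ y) := by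
        apply Finset.sum_le_sum
        intro y hy
        exact Nat.mul_le_mul_right _ (hd y hy)
    _ = (B-1) * ∑ y ∈ S, B^(ρ y) := by rw [Finset.mul_sum]
    _ ≤ (B-1) * ∑ i ∈ Finset.range m, B^i := by
        apply Nat.mul_le_mul_left
        have heq : ∑ y ∈ S, B^(ρ y) = ∑ i ∈ S.image ρ, B^i :=
          (Finset.sum_image (fun y hy z hz h => hinj y hy z hz h)).symm
        rw [heq]
        apply Finset.sum_le_sum_of_subset
        intro i hi
        simp only [Finset.mem_image] at hi
        obtain ⟨y, hy, rfl⟩ := hi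
        simpa using hρm y hy
    _ = B^m - 1 := geo B m (by omega)

lemma int_zero {n d : ℤ} (h : n ∣ d) (h1 : -n < d) (h2 : d < n) : d = 0 := by
  obtain ⟨c, rfl⟩ := h
  rcases lt_trichotomy c 0 with hc | hc | hc
  · nlinarith
  · simp [hc]
  · nlinarith

lemma filter_not_lt_eq {σ : Finset ℕ} {b : ℕ} (hb : b ∈ σ) :
    σ.filter (fun z => ¬ b < z) = insert b (σ.filter (fun z => z < b)) := by
  ext z
  simp only [mem_filter, mem_insert, not_lt]
  constructor
  · rintro ⟨h1, h2⟩
    rcases Nat.lt_or_ge z b with h | h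
    · exact Or.inr ⟨h1, h⟩
    · exact Or.inl (by omega)
  · rintro (rfl | ⟨h1, h2⟩)
    · exact ⟨hb, le_refl _⟩
    · exact ⟨h1, by omega⟩

lemma main {r k : ℕ} {a : ℤ} (hr : 1 ≤ r) (hkr : k ≤ r) {σ τ : Finset ℕ}
    (hσ : σ ∈ GammaA r k a) (hτ : τ ∈ GammaA r k a) (hne : τ ≠ σ)
    {s : ℕ} (hs : s ∈ σ) (hrks : rkk σ s = tOf r a σ)
    (hsub : σ.erase s ⊆ τ) : kap r a σ < kap r a τ := by
  obtain ⟨hσI, hσc, htk, hσm⟩ := mem_unpack hr hkr hσ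
  obtain ⟨hτI, hτc, huk, hτm⟩ := mem_unpack hr hkr hτ
  set t := tOf r a σ with ht_def
  set u := tOf r a τ with hu_def
  have hk1 : 1 ≤ k := by
    rw [← hσc]; exact Finset.card_pos.mpr ⟨s, hs⟩
  -- extract x
  have hec : (σ.erase s).card = k - 1 := by rw [Finset.card_erase_of_mem hs, hσc]
  have hsd : (τ \ σ.erase s).card = 1 := by
    rw [Finset.card_sdiff_of_subset hsub, hτc, hec]; omega
  obtain ⟨x, hxd⟩ := Finset.card_eq_one.mp hsd
  have hτeq : τ = insert x (σ.erase s) := by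
    have h1 : τ \ σ.erase s ∪ σ.erase s = τ := Finset.sdiff_union_of_subset hsub
    rw [← h1, hxd]
    ext z; simp [Finset.mem_union, Finset.mem_insert, or_comm]
  have hxe : x ∉ σ.erase s := by
    have : x ∈ τ \ σ.erase s := by rw [hxd]; simp
    exact (Finset.mem_sdiff.mp this).2
  have hxns : x ≠ s := by
    intro h
    apply hne
    rw [hτeq, h, Finset.insert_erase hs]
  have hxσ : x ∉ σ := fun hc => hxe (Finset.mem_erase.mpr ⟨hxns, hc⟩)
  have hxτ : x ∈ τ := by rw [hτeq]; simp
  -- bounds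
  have hsb : 1 ≤ s ∧ s ≤ r := by have := hσI hs; simpa using this
  have hxb : 1 ≤ x ∧ x ≤ r := by have := hτI hxτ; simpa using this
  -- t + 1 ≤ s
  have hts : t + 1 ≤ s := by
    have h1 : σ.filter (fun z => z < s) ⊆ Finset.Icc 1 (s-1) := by
      intro z hz
      simp only [mem_filter] at hz
      have := hσI hz.1
      simp only [Finset.mem_Icc] at this ⊢
      omega
    have h2 : rkk σ s ≤ s - 1 + 1 - 1 := by
      have := Finset.card_le_card h1
      rwa [Nat.card_Icc] at this
    rw [hrks] at h2
    omega
  -- s + k ≤ r + 1 + t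
  have hsup : s + k ≤ r + 1 + t := by
    have hsplit := Finset.card_filter_add_card_filter_not (s := σ) (p := fun z => ¬ s < z)
    have h1 : σ.filter (fun z => ¬ (fun z => ¬ s < z) z) = σ.filter (fun z => s < z) := by
      apply Finset.filter_congr; intro z _; simp
    have h2 : σ.filter (fun z => ¬ s < z) = insert s (σ.filter (fun z => z < s)) :=
      filter_not_lt_eq hs
    have h3 : s ∉ σ.filter (fun z => z < s) := by simp
    have h4 : (σ.filter (fun z => s < z)).card = k - 1 - t := by
      rw [h1, h2, Finset.card_insert_of_notMem h3] at hsplit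
      have h4' : (σ.filter (fun z => z < s)).card = t := hrks
      omega
    have h5 : σ.filter (fun z => s < z) ⊆ Finset.Icc (s+1) r := by
      intro z hz
      simp only [mem_filter] at hz
      have := hσI hz.1
      simp only [Finset.mem_Icc] at this ⊢
      omega
    have h6 := Finset.card_le_card h5
    rw [Nat.card_Icc, h4] at h6
    omega
  -- sum relation and x + t = s + u
  have hSum : (∑ i ∈ τ, (i:ℤ)) = (∑ i ∈ σ, (i:ℤ)) - s + x := by
    rw [hτeq, Finset.sum_insert hxe]
    have h5 := Finset.sum_erase_add σ (fun i => (i:ℤ)) hs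
    omega
  have hxst : x + t = s + u := by
    have m1 : (∑ i ∈ σ, (i:ℤ)) ≡ a + t [ZMOD (r:ℤ)] := hσm
    have m2 : (∑ i ∈ σ, (i:ℤ)) - s + x ≡ a + u [ZMOD (r:ℤ)] := by rw [← hSum]; exact hτm
    have m3 : ((∑ i ∈ σ, (i:ℤ)) - s + x) - (∑ i ∈ σ, (i:ℤ)) ≡ (a + u) - (a + t) [ZMOD (r:ℤ)] :=
      m2.sub m1
    have m4 : ((x:ℤ) - s) ≡ ((u:ℤ) - t) [ZMOD (r:ℤ)] := by
      have e1 : ((∑ i ∈ σ, (i:ℤ)) - s + x) - (∑ i ∈ σ, (i:ℤ)) = (x:ℤ) - s := by ring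
      have e2 : (a + (u:ℤ)) - (a + t) = (u:ℤ) - t := by ring
      rwa [e1, e2] at m3
    have hdvd : (r:ℤ) ∣ ((u:ℤ) - t) - ((x:ℤ) - s) := m4.dvd
    have hz : ((u:ℤ) - t) - ((x:ℤ) - s) = 0 := int_zero hdvd (by omega) (by omega)
    omega
  have hunet : u ≠ t := by
    intro h
    apply hxns
    omega
  -- splitting lemma
  have split : ∀ (π : Finset ℕ) (c : ℕ), c ∈ π → kap r a π =
      (∑ y ∈ π.filter (fun z => c < z), dig r a π y * (2*r+2)^(rkk π y))
      + dig r a π c * (2*r+2)^(rkk π c)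
      + (∑ y ∈ π.filter (fun z => z < c), dig r a π y * (2*r+2)^(rkk π y)) := by
    intro π c hc
    have h0 := Finset.sum_filter_add_sum_filter_not π (fun z => c < z)
      (fun y => dig r a π y * (2*r+2)^(rkk π y))
    rw [kap, ← h0, filter_not_lt_eq hc, Finset.sum_insert (by simp)]
    ring
  have hdigle : ∀ (π : Finset ℕ) (y : ℕ), dig r a π y ≤ (2*r+2) - 1 := by
    intro π y
    rw [dig]
    have h1 : r - y ≤ r := Nat.sub_le _ _
    have h2 : (if rkk π y = tOf r a π then 1 else 0) ≤ 1 := by split <;> omega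
    omega
  have hpow : ∀ m : ℕ, 1 ≤ (2*r+2)^m := fun m => Nat.one_le_pow _ _ (by omega)
  rcases Nat.lt_or_ge t u with hlt | hge
  · -- UP case: t < u, s < x
    have hxgt : s < x := by omega
    obtain ⟨c, hcσ, hrkc⟩ := exists_rkk (σ := σ) (i := u) (by rw [hσc]; exact huk)
    have hcardle : (σ.filter (fun z => z ≤ x)).card ≤ u := by
      have hsubA : σ.filter (fun z => z ≤ x)
          ⊆ insert s ((σ.filter (fun z => z < s)) ∪ Finset.Ioo s x) := by
        intro z hz
        simp only [mem_filter, mem_insert, mem_union, Finset.mem_Ioo] at hz ⊢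
        have hzx : z ≠ x := fun h => hxσ (h ▸ hz.1)
        rcases Nat.lt_trichotomy z s with h | h | h
        · exact Or.inr (Or.inl ⟨hz.1, h⟩)
        · exact Or.inl h
        · exact Or.inr (Or.inr ⟨h, by omega⟩)
      have h1 := Finset.card_le_card hsubA
      have h2 := Finset.card_insert_le s ((σ.filter (fun z => z < s)) ∪ Finset.Ioo s x)
      have h3 := Finset.card_union_le (σ.filter (fun z => z < s)) (Finset.Ioo s x)
      have h4 : (σ.filter (fun z => z < s)).card = t := hrks
      have h5 : (Finset.Ioo s x).card = x - s - 1 := by rw [Nat.card_Ioo]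
      omega
    have hxc : x < c := by
      by_contra hcon
      push_neg at hcon
      have hins : insert c (σ.filter (fun z => z < c)) ⊆ σ.filter (fun z => z ≤ x) := by
        intro z hz
        simp only [mem_insert, mem_filter] at hz ⊢
        rcases hz with rfl | ⟨h1, h2⟩
        · exact ⟨hcσ, hcon⟩
        · exact ⟨h1, by omega⟩
      have h1 := Finset.card_le_card hins
      rw [Finset.card_insert_of_notMem (by simp)] at h1
      have h2 : (σ.filter (fun z => z < c)).card = u := hrkc
      omega
    have hsc : s < c := by
      rcases Nat.lt_trichotomy s c with h | h | h
      · exact h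
      · exfalso; apply hunet; rw [← hrkc, ← h, hrks]
      · exfalso
        have := rkk_lt_rkk hcσ h
        rw [hrkc, hrks] at this
        omega
    have hcτ : c ∈ τ := hsub (Finset.mem_erase.mpr ⟨by omega, hcσ⟩)
    have hrkcτ : rkk τ c = u := by
      rw [hτeq, rkk_swap hs hxσ hsc hxc, hrkc]
    have eσ := split σ c hcσ
    rw [hrkc] at eσ
    have eτ := split τ c hcτ
    rw [hrkcτ] at eτ
    have hHiSet : τ.filter (fun z => c < z) = σ.filter (fun z => c < z) := by
      rw [hτeq]; exact filter_gt_swap (le_of_lt hsc) (le_of_lt hxc)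
    have hHi : (∑ y ∈ τ.filter (fun z => c < z), dig r a τ y * (2*r+2)^(rkk τ y))
        = (∑ y ∈ σ.filter (fun z => c < z), dig r a σ y * (2*r+2)^(rkk σ y)) := by
      rw [hHiSet]
      apply Finset.sum_congr rfl
      intro y hy
      simp only [mem_filter] at hy
      have hrky : rkk τ y = rkk σ y := by
        rw [hτeq]; exact rkk_swap hs hxσ (by omega) (by omega)
      have hgt : u < rkk σ y := by
        rw [← hrkc]; exact rkk_lt_rkk hcσ hy.2
      rw [dig, dig, hrky, if_neg (by simp only [← hu_def]; omega),
        if_neg (by simp only [← ht_def]; omega)]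
    have hdigσc : dig r a σ c = 2*(r-c) := by
      rw [dig, hrkc, if_neg (by simp only [← ht_def]; omega)]
      omega
    have hdigτc : dig r a τ c = 2*(r-c) + 1 := by
      rw [dig, hrkcτ, ← hu_def, if_pos rfl]
    have hLoσ : (∑ y ∈ σ.filter (fun z => z < c), dig r a σ y * (2*r+2)^(rkk σ y))
        ≤ (2*r+2)^u - 1 := by
      apply lowsum (by omega)
      · intro y hy
        simp only [mem_filter] at hy
        rw [← hrkc]
        exact rkk_lt_rkk hy.1 hy.2
      · intro y hy z hz h
        simp only [mem_filter] at hy hz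
        exact rkk_inj hy.1 hz.1 h
      · intro y _
        exact hdigle σ y
    have hmul : dig r a τ c * (2*r+2)^u = dig r a σ c * (2*r+2)^u + (2*r+2)^u := by
      rw [hdigτc, hdigσc, Nat.add_mul, Nat.one_mul]
    rw [eσ, eτ, hHi, hmul]
    have := hpow u
    omega
  · -- DOWN case: u < t, x < s
    have hult : u < t := by omega
    have hxlt : x < s := by omega
    obtain ⟨y', hy'τ, hrky'⟩ := exists_rkk (σ := τ) (i := t) (by rw [hτc]; exact htk)
    have hfτs : τ.filter (fun z => z < s) = insert x (σ.filter (fun z => z < s)) := by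
      rw [hτeq]
      ext z
      simp only [mem_filter, mem_insert, mem_erase]
      constructor
      · rintro ⟨rfl | ⟨h1, h2⟩, h3⟩
        · exact Or.inl rfl
        · exact Or.inr ⟨h2, h3⟩
      · rintro (rfl | ⟨h1, h2⟩)
        · exact ⟨Or.inl rfl, hxlt⟩
        · exact ⟨Or.inr ⟨by omega, h1⟩, h2⟩
    have hcards : (τ.filter (fun z => z < s)).card = t + 1 := by
      rw [hfτs, Finset.card_insert_of_notMem (by simp [hxσ])]
      have : (σ.filter (fun z => z < s)).card = t := hrks
      omega
    have hy's : y' < s := by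
      by_contra hcon
      push_neg at hcon
      have hsub2 : τ.filter (fun z => z < s) ⊆ τ.filter (fun z => z < y') := by
        intro z hz
        simp only [mem_filter] at hz ⊢
        exact ⟨hz.1, by omega⟩
      have h1 := Finset.card_le_card hsub2
      have h2 : (τ.filter (fun z => z < y')).card = t := hrky'
      omega
    have hsτ : s ∉ τ := by
      rw [hτeq]
      simp only [mem_insert, mem_erase]
      rintro (rfl | ⟨h1, h2⟩)
      · exact hxns rfl
      · exact h1 rfl
    have eσ := split σ s hs
    rw [hrks] at eσ
    have eτ : kap r a τ = (∑ y ∈ τ.filter (fun z => s < z), dig r a τ y * (2*r+2)^(rkk τ y))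
        + (∑ y ∈ τ.filter (fun z => z < s), dig r a τ y * (2*r+2)^(rkk τ y)) := by
      have h0 := Finset.sum_filter_add_sum_filter_not τ (fun z => s < z)
        (fun y => dig r a τ y * (2*r+2)^(rkk τ y))
      have h1 : τ.filter (fun z => ¬ s < z) = τ.filter (fun z => z < s) := by
        ext z
        simp only [mem_filter, not_lt]
        constructor
        · rintro ⟨h2, h3⟩
          refine ⟨h2, ?_⟩
          rcases Nat.lt_or_ge z s with h | h
          · exact h
          · exfalso
            have hzs : z = s := by omega
            rw [hzs] at h2
            exact hsτ h2
        · rintro ⟨h2, h3⟩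
          exact ⟨h2, by omega⟩
      rw [kap, ← h0, h1]
    have hHiSet : τ.filter (fun z => s < z) = σ.filter (fun z => s < z) := by
      rw [hτeq]; exact filter_gt_swap (le_refl s) (le_of_lt hxlt)
    have hHi : (∑ y ∈ τ.filter (fun z => s < z), dig r a τ y * (2*r+2)^(rkk τ y))
        = (∑ y ∈ σ.filter (fun z => s < z), dig r a σ y * (2*r+2)^(rkk σ y)) := by
      rw [hHiSet]
      apply Finset.sum_congr rfl
      intro y hy
      simp only [mem_filter] at hy
      have hrky : rkk τ y = rkk σ y := by
        rw [hτeq]; exact rkk_swap hs hxσ hy.2 (by omega)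
      have hgt : t < rkk σ y := by
        rw [← hrks]; exact rkk_lt_rkk hs hy.2
      rw [dig, dig, hrky, if_neg (by simp only [← hu_def]; omega),
        if_neg (by simp only [← ht_def]; omega)]
    have hdigσs : dig r a σ s = 2*(r-s) + 1 := by
      rw [dig, hrks, ← ht_def, if_pos rfl]
    have hLoσ : (∑ y ∈ σ.filter (fun z => z < s), dig r a σ y * (2*r+2)^(rkk σ y))
        ≤ (2*r+2)^t - 1 := by
      apply lowsum (by omega)
      · intro y hy
        simp only [mem_filter] at hy
        rw [← hrks]
        exact rkk_lt_rkk hy.1 hy.2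
      · intro y hy z hz h
        simp only [mem_filter] at hy hz
        exact rkk_inj hy.1 hz.1 h
      · intro y _
        exact hdigle σ y
    have hLoτ : (2*(r-s) + 2) * (2*r+2)^t
        ≤ (∑ y ∈ τ.filter (fun z => z < s), dig r a τ y * (2*r+2)^(rkk τ y)) := by
      have hy'mem : y' ∈ τ.filter (fun z => z < s) := by
        simp only [mem_filter]; exact ⟨hy'τ, hy's⟩
      have h1 := Finset.single_le_sum
        (f := fun y => dig r a τ y * (2*r+2)^(rkk τ y))
        (fun i _ => Nat.zero_le _) hy'mem
      rw [hrky'] at h1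
      refine le_trans ?_ h1
      apply Nat.mul_le_mul_right
      rw [dig]
      have hsr : s ≤ r := hsb.2
      have h2 : r - s + 1 ≤ r - y' := by omega
      omega
    have hmul : (2*(r-s) + 2) * (2*r+2)^t
        = (2*(r-s) + 1) * (2*r+2)^t + (2*r+2)^t := by ring
    rw [eσ, eτ, hHi, hdigσs]
    rw [hmul] at hLoτ
    have := hpow t
    omega

lemma free_pair {r k : ℕ} {a : ℤ} (hr : 1 ≤ r) (hkr : k ≤ r)
    {F : Finset (Finset ℕ)} (hFE : F ⊆ GammaA r k a) (hF : F.Nonempty) :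
    ∃ σ ∈ F, ∃ s ∈ σ, ∀ τ ∈ F, τ ≠ σ → ¬ (σ \ {s} ⊆ τ) := by
  obtain ⟨σ, hσF, hmax⟩ := Finset.exists_max_image F (kap r a) hF
  have hσE := hFE hσF
  obtain ⟨_, hσc, htk, _⟩ := mem_unpack hr hkr hσE
  obtain ⟨s, hsσ, hrks⟩ := exists_rkk (σ := σ) (i := tOf r a σ) (by rw [hσc]; exact htk)
  refine ⟨σ, hσF, s, hsσ, ?_⟩
  intro τ hτF hτne hsubs
  rw [← Finset.erase_eq] at hsubs
  have h1 := main hr hkr hσE (hFE hτF) hτne hsσ hrks hsubs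
  have h2 := hmax τ hτF
  omega

lemma build {r k : ℕ} {a : ℤ} (hr : 1 ≤ r) (hkr : k ≤ r) :
    ∀ (n : ℕ) (F : Finset (Finset ℕ)), F.card = n → F ⊆ GammaA r k a →
    ∃ l : List (Finset ℕ), l.Nodup ∧ l.toFinset = F ∧
      ∀ i : Fin l.length, ∃ s ∈ l.get i,
        ∀ j : Fin l.length, (j : ℕ) < (i : ℕ) → ¬ (l.get i \ {s} ⊆ l.get j) := by
  intro n
  induction n with
  | zero =>
    intro F hc hFE
    refine ⟨[], by simp, ?_, ?_⟩
    · simp [Finset.card_eq_zero.mp hc]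
    · intro i
      exact absurd i.2 (by simp)
  | succ n ih =>
    intro F hc hFE
    have hne : F.Nonempty := Finset.card_pos.mp (by omega)
    obtain ⟨σ, hσF, s, hsσ, hfree⟩ := free_pair hr hkr hFE hne
    obtain ⟨l, hnd, htf, hprop⟩ := ih (F.erase σ)
      (by rw [Finset.card_erase_of_mem hσF, hc]; rfl)
      (fun τ hτ => hFE ((Finset.erase_subset _ _) hτ))
    have hσl : σ ∉ l := by
      intro hc2
      have : σ ∈ l.toFinset := List.mem_toFinset.mpr hc2
      rw [htf] at this
      exact (Finset.notMem_erase σ F) this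
    refine ⟨l ++ [σ], ?_, ?_, ?_⟩
    · rw [List.nodup_append]
      exact ⟨hnd, List.nodup_singleton σ, by intro b hb c hc; rw [List.mem_singleton] at hc; subst hc; intro h; exact hσl (h ▸ hb)⟩
    · rw [List.toFinset_append, htf]
      simp only [List.toFinset_cons, List.toFinset_nil, insert_empty_eq]
      rw [Finset.union_comm]
      ext z
      simp only [Finset.mem_union, Finset.mem_singleton, Finset.mem_erase]
      constructor
      · rintro (rfl | ⟨_, h⟩)
        · exact hσF
        · exact h
      · intro hz
        by_cases hzs : z = σ
        · exact Or.inl hzs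
        · exact Or.inr ⟨hzs, hz⟩
    · intro i
      have hlen : (l ++ [σ]).length = l.length + 1 := by simp
      rcases Nat.lt_or_ge (i : ℕ) l.length with hi | hi
      · -- in l part
        have hget : (l ++ [σ]).get i = l.get ⟨i, hi⟩ := by
          rw [List.get_eq_getElem, List.get_eq_getElem]
          exact List.getElem_append_left hi
        obtain ⟨s', hs', hprev⟩ := hprop ⟨i, hi⟩
        refine ⟨s', by rwa [hget], ?_⟩
        intro j hj
        have hjl : (j : ℕ) < l.length := lt_trans hj hi
        have hgetj : (l ++ [σ]).get j = l.get ⟨j, hjl⟩ := by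
          rw [List.get_eq_getElem, List.get_eq_getElem]
          exact List.getElem_append_left hjl
        rw [hget, hgetj]
        exact hprev ⟨j, hjl⟩ hj
      · -- last element
        have hieq : (i : ℕ) = l.length := by
          have h2 := i.2
          simp only [List.length_append, List.length_singleton] at h2
          omega
        have hget : (l ++ [σ]).get i = σ := by
          rw [List.get_eq_getElem]
          exact List.getElem_concat_length hieq _
        refine ⟨s, by rwa [hget], ?_⟩
        intro j hj
        have hjl : (j : ℕ) < l.length := by omega
        have hgetj : (l ++ [σ]).get j = l.get ⟨j, hjl⟩ := by
          rw [List.get_eq_getElem, List.get_eq_getElem]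
          exact List.getElem_append_left hjl
        rw [hget, hgetj]
        set τ := l.get ⟨j, hjl⟩ with hτdef
        have hτmem : τ ∈ F.erase σ := by
          rw [← htf]
          apply List.mem_toFinset.mpr
          exact List.get_mem l ⟨j, hjl⟩
        have hτF : τ ∈ F := Finset.mem_of_mem_erase hτmem
        have hτne : τ ≠ σ := Finset.ne_of_mem_erase hτmem
        exact hfree τ hτF hτne


/-- `Γ_{k,r}^a` is leaf-equivalent to the empty `k`-uniform hypergraph. -/
theorem stmt11 (r k : ℕ) (hk : 1 ≤ k) (hkr : k ≤ r) (a : ℤ) :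
    LeafEquivToEmpty (GammaA r k a) := by
  have hr : 1 ≤ r := le_trans hk hkr
  obtain ⟨l, h1, h2, h3⟩ := build hr hkr (GammaA r k a).card (GammaA r k a) rfl (le_refl _)
  exact ⟨l, h1, h2, h3⟩
end
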